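/- arXiv:2107.03569 — 9 statements merged into one kernel-verified Lean document; each statement's English description precedes it below -/
import Mathlib

section
/- Let σ be a well-formed concurrent trace and let e1, e2 be events of σ with e1 occurring before e2 in trace order and performed by different threads. Then e1 happens-before e2 if and only if it is NOT the case that for every lock ℓ, the acquire lockstamp of e2 at ℓ is at most the release lockstamp of e1 at ℓ. Here the acquire lockstamp of e at ℓ is the maximum position (among acquires of ℓ in trace order) of an acquire event f of ℓ with f happens-before-or-equal e (0 if none), and the release lockstamp of e at ℓ is the minimum position (among releases of ℓ) of a release event f of ℓ with e happens-before-or-equal f (∞ if none). -/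
inductive Op : Type
  | read (x : ℕ)
  | write (x : ℕ)
  | acquire (l : ℕ)
  | release (l : ℕ)
  deriving DecidableEq

structure Event where
  tid : ℕ
  op : Op
  deriving DecidableEq

/-- A concurrent trace: a finite sequence of events, each with a thread id and an operation.
Events are identified with their positions `Fin N`; trace order is the order on `Fin N`. -/
structure Trace where
  N : ℕ
  tid : Fin N → ℕ
  op : Fin N → Op

/-- Happens-before: the smallest (reflexive, transitive) order containing thread order and
ordering each release of a lock before every later (in trace order) acquire of that lock. -/
inductive HB (σ : Trace) : Fin σ.N → Fin σ.N → Prop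
  | refl (i : Fin σ.N) : HB σ i i
  | thread {i j : Fin σ.N} : i < j → σ.tid i = σ.tid j → HB σ i j
  | relAcq {i j : Fin σ.N} (l : ℕ) : i < j → σ.op i = Op.release l → σ.op j = Op.acquire l →
      HB σ i j
  | trans {i j k : Fin σ.N} : HB σ i j → HB σ j k → HB σ i k

def accessesVar (σ : Trace) (e : Fin σ.N) (x : ℕ) : Prop :=
  σ.op e = Op.read x ∨ σ.op e = Op.write x

/-- Number of acquire events of lock `l` among the first `n` events. -/
def countAcq (σ : Trace) (l : ℕ) (n : ℕ) : ℕ :=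
  (Finset.univ.filter (fun i : Fin σ.N => (i : ℕ) < n ∧ σ.op i = Op.acquire l)).card

/-- Number of release events of lock `l` among the first `n` events. -/
def countRel (σ : Trace) (l : ℕ) (n : ℕ) : ℕ :=
  (Finset.univ.filter (fun i : Fin σ.N => (i : ℕ) < n ∧ σ.op i = Op.release l)).card

/-- Release `j` matches acquire `i` on lock `l`. -/
def Matched (σ : Trace) (l : ℕ) (i j : Fin σ.N) : Prop :=
  σ.op i = Op.acquire l ∧ σ.op j = Op.release l ∧ i < j ∧
    countAcq σ l ((i : ℕ) + 1) = countRel σ l ((j : ℕ) + 1)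

/-- Well-formedness: per lock, acquires and releases alternate (acquire first), and
matching acquire/release pairs are performed by the same thread. -/
def WellFormed (σ : Trace) : Prop :=
  (∀ l n, countRel σ l n ≤ countAcq σ l n ∧ countAcq σ l n ≤ countRel σ l n + 1) ∧
  (∀ (l : ℕ) (i j : Fin σ.N), Matched σ l i j → σ.tid i = σ.tid j)

/-- Position of an acquire event among acquires of its lock (1-based). -/
def posAcq (σ : Trace) (l : ℕ) (f : Fin σ.N) : ℕ := countAcq σ l ((f : ℕ) + 1)

/-- Position of a release event among releases of its lock (1-based). -/
def posRel (σ : Trace) (l : ℕ) (f : Fin σ.N) : ℕ := countRel σ l ((f : ℕ) + 1)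

open scoped Classical in
/-- Acquire lockstamp: max position of an acquire of `l` happening-before-or-equal `e` (0 if none). -/
noncomputable def acqLS (σ : Trace) (e : Fin σ.N) (l : ℕ) : ℕ :=
  (Finset.univ.filter (fun f : Fin σ.N => σ.op f = Op.acquire l ∧ HB σ f e)).sup
    (fun f => posAcq σ l f)

open scoped Classical in
/-- Release lockstamp: min position of a release of `l` that `e` happens-before-or-equal (∞ if none). -/
noncomputable def relLS (σ : Trace) (e : Fin σ.N) (l : ℕ) : ℕ∞ :=
  (Finset.univ.filter (fun f : Fin σ.N => σ.op f = Op.release l ∧ HB σ e f)).inf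
    (fun f => ((posRel σ l f : ℕ) : ℕ∞))

lemma countAcq_mono (σ : Trace) (l : ℕ) {m n : ℕ} (h : m ≤ n) :
    countAcq σ l m ≤ countAcq σ l n := by
  apply Finset.card_le_card
  intro i hi
  simp only [Finset.mem_filter] at *
  exact ⟨hi.1, lt_of_lt_of_le hi.2.1 h, hi.2.2⟩

lemma countRel_mono (σ : Trace) (l : ℕ) {m n : ℕ} (h : m ≤ n) :
    countRel σ l m ≤ countRel σ l n := by
  apply Finset.card_le_card
  intro i hi
  simp only [Finset.mem_filter] at *
  exact ⟨hi.1, lt_of_lt_of_le hi.2.1 h, hi.2.2⟩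

lemma countAcq_lt_succ (σ : Trace) (l : ℕ) (f : Fin σ.N) (hf : σ.op f = Op.acquire l) :
    countAcq σ l (f : ℕ) < countAcq σ l ((f : ℕ) + 1) := by
  apply Finset.card_lt_card
  constructor
  · intro i hi
    simp only [Finset.mem_filter] at *
    exact ⟨hi.1, Nat.lt_succ_of_lt hi.2.1, hi.2.2⟩
  · intro hsub
    have := hsub (by simp [Finset.mem_filter, hf] : f ∈ Finset.univ.filter
      (fun i : Fin σ.N => (i : ℕ) < (f : ℕ) + 1 ∧ σ.op i = Op.acquire l))
    simp [Finset.mem_filter] at this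

lemma countRel_lt_succ (σ : Trace) (l : ℕ) (g : Fin σ.N) (hg : σ.op g = Op.release l) :
    countRel σ l (g : ℕ) < countRel σ l ((g : ℕ) + 1) := by
  apply Finset.card_lt_card
  constructor
  · intro i hi
    simp only [Finset.mem_filter] at *
    exact ⟨hi.1, Nat.lt_succ_of_lt hi.2.1, hi.2.2⟩
  · intro hsub
    have := hsub (by simp [Finset.mem_filter, hg] : g ∈ Finset.univ.filter
      (fun i : Fin σ.N => (i : ℕ) < (g : ℕ) + 1 ∧ σ.op i = Op.release l))
    simp [Finset.mem_filter] at this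

/-- If a release precedes an acquire of the same lock, its position is strictly smaller. -/
lemma posRel_lt_posAcq (σ : Trace) (hwf : WellFormed σ) (l : ℕ) {g f : Fin σ.N}
    (hg : σ.op g = Op.release l) (hf : σ.op f = Op.acquire l) (hlt : g < f) :
    posRel σ l g < posAcq σ l f := by
  have h1 : countRel σ l ((g : ℕ) + 1) ≤ countRel σ l (f : ℕ) :=
    countRel_mono σ l (by exact_mod_cast hlt)
  have h2 : countRel σ l (f : ℕ) ≤ countAcq σ l (f : ℕ) := (hwf.1 l f).1
  have h3 := countAcq_lt_succ σ l f hf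
  unfold posRel posAcq
  omega

/-- Converse: positions determine trace order between a release and an acquire. -/
lemma lt_of_posRel_lt_posAcq (σ : Trace) (hwf : WellFormed σ) (l : ℕ) {g f : Fin σ.N}
    (hg : σ.op g = Op.release l) (hf : σ.op f = Op.acquire l)
    (hpos : posRel σ l g < posAcq σ l f) : g < f := by
  by_contra hc
  push_neg at hc
  have hne : f ≠ g := by
    intro h; rw [h, hg] at hf; exact Op.noConfusion hf
  have hfg : f < g := lt_of_le_of_ne hc hne
  have h1 : countAcq σ l ((f : ℕ) + 1) ≤ countAcq σ l (g : ℕ) :=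
    countAcq_mono σ l (by exact_mod_cast hfg)
  have h2 : countAcq σ l (g : ℕ) ≤ countRel σ l (g : ℕ) + 1 := (hwf.1 l g).2
  have h3 := countRel_lt_succ σ l g hg
  unfold posRel posAcq at hpos
  omega

/-- Any HB between events of different threads passes through a release-acquire pair. -/
lemma hb_cross (σ : Trace) {i j : Fin σ.N} (h : HB σ i j) (ht : σ.tid i ≠ σ.tid j) :
    ∃ (l : ℕ) (g f : Fin σ.N), σ.op g = Op.release l ∧ σ.op f = Op.acquire l ∧ g < f ∧
      HB σ i g ∧ HB σ f j := by
  induction h with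
  | refl i => exact absurd rfl ht
  | thread hlt heq => exact absurd heq ht
  | relAcq l hlt hg hf => exact ⟨l, _, _, hg, hf, hlt, HB.refl _, HB.refl _⟩
  | @trans a b c h1 h2 ih1 ih2 =>
    by_cases hc : σ.tid a = σ.tid b
    · have ht2 : σ.tid b ≠ σ.tid c := fun h => ht (hc.trans h)
      obtain ⟨l, g, f, hg, hf, hgf, hbg, hfc⟩ := ih2 ht2
      exact ⟨l, g, f, hg, hf, hgf, HB.trans h1 hbg, hfc⟩
    · obtain ⟨l, g, f, hg, hf, hgf, hag, hfb⟩ := ih1 hc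
      exact ⟨l, g, f, hg, hf, hgf, hag, HB.trans hfb h2⟩

/-- For a well-formed trace and events `e1 <(trace) e2` of different threads,
`e1` happens-before `e2` iff it is NOT the case that for every lock `ℓ` the acquire lockstamp
of `e2` at `ℓ` is at most the release lockstamp of `e1` at `ℓ`. -/
theorem hb_iff_lockstamp (σ : Trace) (hwf : WellFormed σ) (e1 e2 : Fin σ.N)
    (hlt : e1 < e2) (htid : σ.tid e1 ≠ σ.tid e2) :
    HB σ e1 e2 ↔ ¬ (∀ l : ℕ, ((acqLS σ e2 l : ℕ) : ℕ∞) ≤ relLS σ e1 l) := by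
  classical
  constructor
  · intro h hall
    obtain ⟨l, g, f, hg, hf, hgf, h1g, hf2⟩ := hb_cross σ h htid
    have hmemg : g ∈ Finset.univ.filter
        (fun f : Fin σ.N => σ.op f = Op.release l ∧ HB σ e1 f) := by
      simp [Finset.mem_filter, hg, h1g]
    have hmemf : f ∈ Finset.univ.filter
        (fun f : Fin σ.N => σ.op f = Op.acquire l ∧ HB σ f e2) := by
      simp [Finset.mem_filter, hf, hf2]
    have hrel : relLS σ e1 l ≤ ((posRel σ l g : ℕ) : ℕ∞) := Finset.inf_le hmemg
    have hacq : posAcq σ l f ≤ acqLS σ e2 l := Finset.le_sup hmemf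
    have hpos := posRel_lt_posAcq σ hwf l hg hf hgf
    have : relLS σ e1 l < ((acqLS σ e2 l : ℕ) : ℕ∞) := by
      calc relLS σ e1 l ≤ ((posRel σ l g : ℕ) : ℕ∞) := hrel
        _ < ((posAcq σ l f : ℕ) : ℕ∞) := by exact_mod_cast hpos
        _ ≤ ((acqLS σ e2 l : ℕ) : ℕ∞) := by exact_mod_cast hacq
    exact absurd (hall l) (not_le.mpr this)
  · intro h
    push_neg at h
    obtain ⟨l, hl⟩ := h
    rw [relLS, Finset.inf_lt_iff] at hl
    obtain ⟨g, hgmem, hglt⟩ := hl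
    simp only [Finset.mem_filter, Finset.mem_univ, true_and] at hgmem
    obtain ⟨hg, h1g⟩ := hgmem
    have hglt' : posRel σ l g < acqLS σ e2 l := by exact_mod_cast hglt
    rw [acqLS, Finset.lt_sup_iff] at hglt'
    obtain ⟨f, hfmem, hflt⟩ := hglt'
    simp only [Finset.mem_filter, Finset.mem_univ, true_and] at hfmem
    obtain ⟨hf, hf2⟩ := hfmem
    have hgf : g < f := lt_of_posRel_lt_posAcq σ hwf l hg hf hflt
    exact HB.trans (HB.trans h1g (HB.relAcq l hgf hg hf)) hf2
end

section
/- Let σ be a well-formed trace. A pair of conflicting access events (e1, e2) with e1 before e2 in trace order is a consecutive conflicting pair on variable x if both access x, at least one is a write, they are in different threads, and no write event to x lies strictly between them in trace order. Then σ has a pair of conflicting events unordered by happens-before if and only if σ has a consecutive conflicting pair that is unordered by happens-before. -/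
/-- Two events conflict on variable `x`: different threads, both access `x`, at least one writes. -/
def Conflicting (σ : Trace) (x : ℕ) (e1 e2 : Fin σ.N) : Prop :=
  σ.tid e1 ≠ σ.tid e2 ∧ accessesVar σ e1 x ∧ accessesVar σ e2 x ∧
    (σ.op e1 = Op.write x ∨ σ.op e2 = Op.write x)

/-- Consecutive conflicting pair on `x`: conflicting, `e1` before `e2` in trace order, and no
write to `x` strictly between them. -/
def ConsecConf (σ : Trace) (x : ℕ) (e1 e2 : Fin σ.N) : Prop :=
  e1 < e2 ∧ Conflicting σ x e1 e2 ∧ ∀ f : Fin σ.N, e1 < f → f < e2 → σ.op f ≠ Op.write x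

lemma HB_le {σ : Trace} {i j : Fin σ.N} (h : HB σ i j) : i ≤ j := by
  induction h with
  | refl => exact le_refl _
  | thread h _ => exact le_of_lt h
  | relAcq _ h _ _ => exact le_of_lt h
  | trans _ _ ih1 ih2 => exact le_trans ih1 ih2

lemma key_lemma (σ : Trace) : ∀ (d x : ℕ) (e1 e2 : Fin σ.N), (e2 : ℕ) - (e1 : ℕ) ≤ d →
    e1 < e2 → Conflicting σ x e1 e2 → ¬ HB σ e1 e2 → ¬ HB σ e2 e1 →
    ∃ (y : ℕ) (f1 f2 : Fin σ.N), ConsecConf σ y f1 f2 ∧ ¬ HB σ f1 f2 ∧ ¬ HB σ f2 f1 := by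
  intro d
  induction d with
  | zero =>
    intro x e1 e2 hle hlt _ _ _
    have : (e1 : ℕ) < e2 := hlt
    omega
  | succ d ih =>
    intro x e1 e2 hle hlt hconf h12 h21
    by_cases hw : ∀ f : Fin σ.N, e1 < f → f < e2 → σ.op f ≠ Op.write x
    · exact ⟨x, e1, e2, ⟨hlt, hconf, hw⟩, h12, h21⟩
    · push_neg at hw
      obtain ⟨f, hf1, hf2, hfw⟩ := hw
      have hf1n : (e1 : ℕ) < f := hf1
      have hf2n : (f : ℕ) < e2 := hf2
      by_cases h1f : HB σ e1 f
      · have hfe2 : ¬ HB σ f e2 := fun h => h12 (HB.trans h1f h)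
        have hne : σ.tid f ≠ σ.tid e2 := fun h => hfe2 (HB.thread hf2 h)
        have h2f : ¬ HB σ e2 f := fun h => absurd (HB_le h) (not_le.mpr hf2)
        exact ih x f e2 (by omega) hf2
          ⟨hne, Or.inr hfw, hconf.2.2.1, Or.inl hfw⟩ hfe2 h2f
      · have hne : σ.tid e1 ≠ σ.tid f := fun h => h1f (HB.thread hf1 h)
        have hfe1 : ¬ HB σ f e1 := fun h => absurd (HB_le h) (not_le.mpr hf1)
        exact ih x e1 f (by omega) hf1
          ⟨hne, hconf.2.1, Or.inr hfw, Or.inr hfw⟩ h1f hfe1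

/-- A well-formed trace has a conflicting pair unordered by happens-before
iff it has a consecutive conflicting pair unordered by happens-before. -/
theorem hb_race_iff_consecutive_race (σ : Trace) (hwf : WellFormed σ) :
    (∃ (x : ℕ) (e1 e2 : Fin σ.N), Conflicting σ x e1 e2 ∧ ¬ HB σ e1 e2 ∧ ¬ HB σ e2 e1) ↔
    (∃ (x : ℕ) (e1 e2 : Fin σ.N), ConsecConf σ x e1 e2 ∧ ¬ HB σ e1 e2 ∧ ¬ HB σ e2 e1) := by
  constructor
  · rintro ⟨x, e1, e2, hconf, h12, h21⟩
    rcases lt_trichotomy e1 e2 with h | h | h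
    · exact key_lemma σ ((e2 : ℕ) - e1) x e1 e2 le_rfl h hconf h12 h21
    · exact absurd (h ▸ HB.refl e1) h12
    · exact key_lemma σ ((e1 : ℕ) - e2) x e2 e1 le_rfl h
        ⟨hconf.1.symm, hconf.2.2.1, hconf.2.1, hconf.2.2.2.symm⟩ h21 h12
  · rintro ⟨x, e1, e2, ⟨_, hconf, _⟩, h12, h21⟩
    exact ⟨x, e1, e2, hconf, h12, h21⟩
end

section
/- In any trace σ with N events, the number of consecutive conflicting pairs of events is at most 2N. -/
/-- Helper: whether an operation is a read. -/
def isRead : Op → Bool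
  | Op.read _ => true
  | _ => false

open scoped Classical in
/-- A trace with `N` events has at most `2N` consecutive conflicting pairs. -/
theorem consecutive_conflicting_pairs_le (σ : Trace) :
    (Finset.univ.filter
      (fun p : Fin σ.N × Fin σ.N => ∃ x : ℕ, ConsecConf σ x p.1 p.2)).card ≤ 2 * σ.N := by
  classical
  have key := Finset.card_le_card_of_injOn
    (f := fun p : Fin σ.N × Fin σ.N =>
      if isRead (σ.op p.2) then (p.2, true) else (p.1, false))
    (s := Finset.univ.filter
      (fun p : Fin σ.N × Fin σ.N => ∃ x : ℕ, ConsecConf σ x p.1 p.2))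
    (t := (Finset.univ : Finset (Fin σ.N × Bool)))
    (fun _ _ => Finset.mem_univ _)
    ?_
  · simpa [Fintype.card_prod, mul_comm] using key
  · intro p hp q hq hfq
    simp only [Finset.mem_coe, Finset.mem_filter] at hp hq
    obtain ⟨-, x, hpx, ⟨_, acc1p, acc2p, wrp⟩, nwp⟩ := hp
    obtain ⟨-, y, hqy, ⟨_, acc1q, acc2q, wrq⟩, nwq⟩ := hq
    by_cases h2 : isRead (σ.op p.2)
    · -- both second events are reads
      have h2' : isRead (σ.op q.2) := by
        by_contra hc
        simp [h2, hc] at hfq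
      simp only [h2, h2', if_pos] at hfq
      have he2 : p.2 = q.2 := (Prod.mk.injEq _ _ _ _ ▸ hfq).1
      obtain ⟨a, ha⟩ : ∃ a, σ.op p.2 = Op.read a := by
        rcases hop : σ.op p.2 with a | a | a | a <;> simp [hop, isRead] at h2 ⊢
      have hxa : x = a := by
        rcases acc2p with h | h <;> rw [ha] at h <;> simp_all
      have hya : y = a := by
        rcases acc2q with h | h <;> rw [← he2, ha] at h <;> simp_all
      have hxy : x = y := hxa.trans hya.symm
      subst hxy
      have hw1p : σ.op p.1 = Op.write x := by
        rcases wrp with h | h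
        · exact h
        · rw [ha] at h; simp at h
      have hw1q : σ.op q.1 = Op.write x := by
        rcases wrq with h | h
        · exact h
        · rw [← he2, ha] at h; simp at h
      have he1 : p.1 = q.1 := by
        rcases lt_trichotomy p.1 q.1 with h | h | h
        · exact absurd hw1q (nwp q.1 h (he2 ▸ hqy))
        · exact h
        · exact absurd hw1p (nwq p.1 h (he2 ▸ hpx))
      exact Prod.ext he1 he2
    · -- both second events are writes (non-reads)
      have h2' : ¬ isRead (σ.op q.2) := by
        by_contra hc
        simp [h2, hc] at hfq
      simp only [h2, h2', if_neg, not_false_iff] at hfq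
      have he1 : p.1 = q.1 := (Prod.mk.injEq _ _ _ _ ▸ hfq).1
      have hw2p : σ.op p.2 = Op.write x := by
        rcases acc2p with h | h
        · rw [h] at h2; simp [isRead] at h2
        · exact h
      have hw2q : σ.op q.2 = Op.write y := by
        rcases acc2q with h | h
        · rw [h] at h2'; simp [isRead] at h2'
        · exact h
      have hxy : x = y := by
        rcases acc1p with h | h <;> rcases acc1q with h' | h' <;>
          rw [← he1] at h' <;> rw [h] at h' <;> simp_all
      subst hxy
      have he2 : p.2 = q.2 := by
        rcases lt_trichotomy p.2 q.2 with h | h | h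
        · exact absurd hw2p (nwq p.2 (he1 ▸ hpx) h)
        · exact h
        · exact absurd hw2q (nwp q.2 (he1 ▸ hqy) h)
      exact Prod.ext he1 he2
end

section
/- Let σ be a well-formed trace. Define the graph G(HB_σ) on the events of σ with an edge (e1, e2) whenever e2 is the immediate successor of e1 in thread order, or e1 is a release of lock ℓ, e2 is an acquire of lock ℓ, e1 precedes e2 in trace order, and no event accessing lock ℓ occurs strictly between them. Then for any two distinct events e1, e2, e1 happens-before e2 if and only if e2 is reachable from e1 in G(HB_σ). -/
/-- The operation of an event is on lock `l`. -/
def opOnLock (o : Op) (l : ℕ) : Prop := o = Op.acquire l ∨ o = Op.release l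

/-- Edges of the graph `G(HB_σ)`: immediate thread-order successor edges, and edges from a
release of lock `ℓ` to the next acquire of `ℓ` with no intervening event on `ℓ`. -/
def GEdge (σ : Trace) (i j : Fin σ.N) : Prop :=
  (i < j ∧ σ.tid i = σ.tid j ∧ ∀ k : Fin σ.N, i < k → k < j → σ.tid k ≠ σ.tid i) ∨
  (∃ l : ℕ, i < j ∧ σ.op i = Op.release l ∧ σ.op j = Op.acquire l ∧
    ∀ k : Fin σ.N, i < k → k < j → ¬ opOnLock (σ.op k) l)

instance (o : Op) (l : ℕ) : Decidable (opOnLock o l) := by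
  unfold opOnLock; infer_instance

/-- Generic count of events with a fixed operation among the first `n` events. -/
def cntOp (σ : Trace) (o : Op) (n : ℕ) : ℕ :=
  (Finset.univ.filter (fun i : Fin σ.N => (i : ℕ) < n ∧ σ.op i = o)).card

lemma countAcq_eq (σ : Trace) (l n : ℕ) : countAcq σ l n = cntOp σ (Op.acquire l) n := rfl
lemma countRel_eq (σ : Trace) (l n : ℕ) : countRel σ l n = cntOp σ (Op.release l) n := rfl

lemma cntOp_zero (σ : Trace) (o : Op) : cntOp σ o 0 = 0 := by
  simp [cntOp]

lemma cntOp_mono (σ : Trace) (o : Op) {a b : ℕ} (h : a ≤ b) : cntOp σ o a ≤ cntOp σ o b := by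
  apply Finset.card_le_card
  intro i hi
  simp only [Finset.mem_filter, Finset.mem_univ, true_and] at *
  exact ⟨lt_of_lt_of_le hi.1 h, hi.2⟩

lemma cntOp_succ_self (σ : Trace) (o : Op) (i : Fin σ.N) (h : σ.op i = o) :
    cntOp σ o ((i : ℕ) + 1) = cntOp σ o (i : ℕ) + 1 := by
  unfold cntOp
  have heq : (Finset.univ.filter (fun j : Fin σ.N => (j : ℕ) < (i : ℕ) + 1 ∧ σ.op j = o)) =
      insert i (Finset.univ.filter (fun j : Fin σ.N => (j : ℕ) < (i : ℕ) ∧ σ.op j = o)) := by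
    ext j
    simp only [Finset.mem_filter, Finset.mem_insert, Finset.mem_univ, true_and]
    constructor
    · rintro ⟨hlt, ho⟩
      rcases Nat.lt_succ_iff_lt_or_eq.mp hlt with h' | h'
      · exact Or.inr ⟨h', ho⟩
      · exact Or.inl (Fin.ext h')
    · rintro (rfl | ⟨hlt, ho⟩)
      · exact ⟨Nat.lt_succ_self _, h⟩
      · exact ⟨Nat.lt_succ_of_lt hlt, ho⟩
  rw [heq, Finset.card_insert_of_notMem]
  simp

lemma cntOp_succ_of_no (σ : Trace) (o : Op) (n : ℕ)
    (h : ∀ i : Fin σ.N, (i : ℕ) = n → σ.op i ≠ o) :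
    cntOp σ o (n + 1) = cntOp σ o n := by
  unfold cntOp
  congr 1
  ext j
  simp only [Finset.mem_filter, Finset.mem_univ, true_and]
  constructor
  · rintro ⟨hlt, ho⟩
    rcases Nat.lt_succ_iff_lt_or_eq.mp hlt with h' | h'
    · exact ⟨h', ho⟩
    · exact absurd ho (h j h')
  · rintro ⟨hlt, ho⟩
    exact ⟨Nat.lt_succ_of_lt hlt, ho⟩

lemma cntOp_succ_ne (σ : Trace) (o : Op) (i : Fin σ.N) (h : σ.op i ≠ o) :
    cntOp σ o ((i : ℕ) + 1) = cntOp σ o (i : ℕ) :=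
  cntOp_succ_of_no σ o _ (fun r hr => by rw [show r = i from Fin.ext hr]; exact h)

lemma cntOp_exists (σ : Trace) (o : Op) (a : ℕ) :
    ∀ b, cntOp σ o a < cntOp σ o b →
      ∃ r : Fin σ.N, a ≤ (r : ℕ) ∧ (r : ℕ) < b ∧ σ.op r = o ∧
        cntOp σ o ((r : ℕ) + 1) = cntOp σ o a + 1 := by
  intro b
  induction b with
  | zero => intro h; rw [cntOp_zero] at h; omega
  | succ b ih =>
    intro h
    by_cases hb : cntOp σ o a < cntOp σ o b
    · obtain ⟨r, h1, h2, h3, h4⟩ := ih hb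
      exact ⟨r, h1, Nat.lt_succ_of_lt h2, h3, h4⟩
    · push_neg at hb
      by_cases he : ∃ i : Fin σ.N, (i : ℕ) = b ∧ σ.op i = o
      · obtain ⟨r, hr, ho⟩ := he
        subst hr
        have hstep := cntOp_succ_self σ o r ho
        have hle : a ≤ (r : ℕ) := by
          by_contra hab'
          push_neg at hab'
          have := cntOp_mono σ o (show (r : ℕ) + 1 ≤ a by omega)
          omega
        exact ⟨r, hle, Nat.lt_succ_self _, ho, by omega⟩
      · push_neg at he
        have := cntOp_succ_of_no σ o b he
        omega

lemma reach_thread (σ : Trace) :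
    ∀ n (i j : Fin σ.N), (j : ℕ) - (i : ℕ) ≤ n → i < j → σ.tid i = σ.tid j →
      Relation.ReflTransGen (GEdge σ) i j := by
  intro n
  induction n with
  | zero =>
    intro i j hn hij _
    rw [Fin.lt_def] at hij
    omega
  | succ n ih =>
    intro i j hn hij htid
    have hne : (Finset.univ.filter
        (fun k : Fin σ.N => i < k ∧ k ≤ j ∧ σ.tid k = σ.tid i)).Nonempty := by
      refine ⟨j, ?_⟩
      simp only [Finset.mem_filter, Finset.mem_univ, true_and]
      exact ⟨hij, le_refl j, htid.symm⟩
    set k := Finset.min' _ hne with hkdef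
    have hkS := Finset.min'_mem _ hne
    simp only [Finset.mem_filter, Finset.mem_univ, true_and] at hkS
    obtain ⟨hik, hkj, hkt⟩ := hkS
    have hedge : GEdge σ i k := by
      refine Or.inl ⟨hik, hkt.symm, fun m him hmk htm => ?_⟩
      have hmS : m ∈ Finset.univ.filter
          (fun k : Fin σ.N => i < k ∧ k ≤ j ∧ σ.tid k = σ.tid i) := by
        simp only [Finset.mem_filter, Finset.mem_univ, true_and]
        exact ⟨him, le_of_lt (lt_of_lt_of_le hmk hkj), htm⟩
      exact absurd (Finset.min'_le _ m hmS) (not_le.mpr hmk)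
    by_cases hkj' : k = j
    · exact hkj' ▸ Relation.ReflTransGen.single hedge
    · have hkj2 : k < j := lt_of_le_of_ne hkj hkj'
      refine Relation.ReflTransGen.head hedge (ih k j ?_ hkj2 (hkt.trans htid))
      rw [Fin.lt_def] at hik
      omega

lemma reach_relacq (σ : Trace) (hwf : WellFormed σ) :
    ∀ n (l : ℕ) (i j : Fin σ.N), (j : ℕ) - (i : ℕ) ≤ n → i < j →
      σ.op i = Op.release l → σ.op j = Op.acquire l →
      Relation.ReflTransGen (GEdge σ) i j := by
  intro n
  induction n with
  | zero =>
    intro l i j hn hij _ _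
    rw [Fin.lt_def] at hij
    omega
  | succ n ih =>
    intro l i j hn hij hi hj
    have hne : (Finset.univ.filter
        (fun k : Fin σ.N => i < k ∧ k ≤ j ∧ opOnLock (σ.op k) l)).Nonempty := by
      refine ⟨j, ?_⟩
      simp only [Finset.mem_filter, Finset.mem_univ, true_and]
      exact ⟨hij, le_refl j, Or.inl hj⟩
    set k := Finset.min' _ hne with hkdef
    have hkS := Finset.min'_mem _ hne
    simp only [Finset.mem_filter, Finset.mem_univ, true_and] at hkS
    obtain ⟨hik, hkj, hkl⟩ := hkS
    have hiknat : (i : ℕ) < (k : ℕ) := Fin.lt_def.mp hik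
    have hkjnat : (k : ℕ) ≤ (j : ℕ) := Fin.le_def.mp hkj
    -- no event on lock l strictly between i and k
    have hmin : ∀ m : Fin σ.N, i < m → m < k → ¬ opOnLock (σ.op m) l := by
      intro m him hmk hml
      have hmS : m ∈ Finset.univ.filter
          (fun k : Fin σ.N => i < k ∧ k ≤ j ∧ opOnLock (σ.op k) l) := by
        simp only [Finset.mem_filter, Finset.mem_univ, true_and]
        exact ⟨him, le_of_lt (lt_of_lt_of_le hmk hkj), hml⟩
      exact absurd (Finset.min'_le _ m hmS) (not_le.mpr hmk)
    -- counting facts around i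
    have hRi : cntOp σ (Op.release l) ((i : ℕ) + 1) = cntOp σ (Op.release l) (i : ℕ) + 1 :=
      cntOp_succ_self σ _ i hi
    have hAi : cntOp σ (Op.acquire l) ((i : ℕ) + 1) = cntOp σ (Op.acquire l) (i : ℕ) :=
      cntOp_succ_ne σ _ i (by rw [hi]; simp)
    have hWi0 := hwf.1 l (i : ℕ)
    have hWi1 := hwf.1 l ((i : ℕ) + 1)
    rw [countAcq_eq, countRel_eq] at hWi0 hWi1
    -- acquire count is constant between i+1 and k
    have hAconst : cntOp σ (Op.acquire l) (k : ℕ) ≤ cntOp σ (Op.acquire l) ((i : ℕ) + 1) := by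
      by_contra hcon
      push_neg at hcon
      obtain ⟨r, hr1, hr2, hr3, _⟩ := cntOp_exists σ (Op.acquire l) ((i : ℕ) + 1) (k : ℕ) hcon
      exact hmin r (Fin.lt_def.mpr (by omega)) (Fin.lt_def.mpr hr2) (Or.inl hr3)
    have hmonoR : cntOp σ (Op.release l) ((i : ℕ) + 1) ≤ cntOp σ (Op.release l) (k : ℕ) :=
      cntOp_mono σ _ (by omega)
    -- k must be an acquire of l
    have hkacq : σ.op k = Op.acquire l := by
      rcases hkl with h | h
      · exact h
      · exfalso
        have hRk : cntOp σ (Op.release l) ((k : ℕ) + 1)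
            = cntOp σ (Op.release l) (k : ℕ) + 1 := cntOp_succ_self σ _ k h
        have hAk : cntOp σ (Op.acquire l) ((k : ℕ) + 1)
            = cntOp σ (Op.acquire l) (k : ℕ) := cntOp_succ_ne σ _ k (by rw [h]; simp)
        have hWk1 := hwf.1 l ((k : ℕ) + 1)
        rw [countAcq_eq, countRel_eq] at hWk1
        have hmonoA : cntOp σ (Op.acquire l) ((i : ℕ) + 1) ≤ cntOp σ (Op.acquire l) (k : ℕ) :=
          cntOp_mono σ _ (by omega)
        omega
    have hedge : GEdge σ i k :=
      Or.inr ⟨l, hik, hi, hkacq, fun m h1 h2 => hmin m h1 h2⟩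
    by_cases hkj' : k = j
    · exact hkj' ▸ Relation.ReflTransGen.single hedge
    · have hkj2 : k < j := lt_of_le_of_ne hkj hkj'
      have hkjnat2 : (k : ℕ) < (j : ℕ) := Fin.lt_def.mp hkj2
      -- find the matching release r of acquire k, with k < r < j
      have hAk : cntOp σ (Op.acquire l) ((k : ℕ) + 1)
          = cntOp σ (Op.acquire l) (k : ℕ) + 1 := cntOp_succ_self σ _ k hkacq
      have hRk : cntOp σ (Op.release l) ((k : ℕ) + 1)
          = cntOp σ (Op.release l) (k : ℕ) := cntOp_succ_ne σ _ k (by rw [hkacq]; simp)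
      have hWk0 := hwf.1 l (k : ℕ)
      have hWk1 := hwf.1 l ((k : ℕ) + 1)
      have hAj : cntOp σ (Op.acquire l) ((j : ℕ) + 1)
          = cntOp σ (Op.acquire l) (j : ℕ) + 1 := cntOp_succ_self σ _ j hj
      have hRj : cntOp σ (Op.release l) ((j : ℕ) + 1)
          = cntOp σ (Op.release l) (j : ℕ) := cntOp_succ_ne σ _ j (by rw [hj]; simp)
      have hWj1 := hwf.1 l ((j : ℕ) + 1)
      rw [countAcq_eq, countRel_eq] at hWk0 hWk1 hWj1
      have hmonoA2 : cntOp σ (Op.acquire l) ((k : ℕ) + 1) ≤ cntOp σ (Op.acquire l) (j : ℕ) :=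
        cntOp_mono σ _ (by omega)
      have hlt : cntOp σ (Op.release l) ((k : ℕ) + 1) < cntOp σ (Op.release l) (j : ℕ) := by
        omega
      obtain ⟨r, hr1, hr2, hr3, hr4⟩ := cntOp_exists σ (Op.release l) ((k : ℕ) + 1) (j : ℕ) hlt
      have hkr : k < r := Fin.lt_def.mpr (by omega)
      have hrj : r < j := Fin.lt_def.mpr hr2
      have hmatched : Matched σ l k r := by
        refine ⟨hkacq, hr3, hkr, ?_⟩
        rw [countAcq_eq, countRel_eq]
        omega
      have htid : σ.tid k = σ.tid r := hwf.2 l k r hmatched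
      have path1 : Relation.ReflTransGen (GEdge σ) k r :=
        reach_thread σ ((r : ℕ) - (k : ℕ)) k r le_rfl hkr htid
      have path2 : Relation.ReflTransGen (GEdge σ) r j := by
        refine ih l r j ?_ hrj hr3 hj
        omega
      exact (Relation.ReflTransGen.single hedge).trans (path1.trans path2)

/-- For a well-formed trace and distinct events `e1, e2`,
`e1` happens-before `e2` iff `e2` is reachable from `e1` in the graph `G(HB_σ)`. -/
theorem hb_iff_reachable (σ : Trace) (hwf : WellFormed σ) (e1 e2 : Fin σ.N) (hne : e1 ≠ e2) :
    HB σ e1 e2 ↔ Relation.ReflTransGen (GEdge σ) e1 e2 := by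
  clear hne
  constructor
  · intro hb
    induction hb with
    | refl => exact Relation.ReflTransGen.refl
    | thread h ht => exact reach_thread σ _ _ _ le_rfl h ht
    | relAcq l h h1 h2 => exact reach_relacq σ hwf _ l _ _ le_rfl h h1 h2
    | trans _ _ ih1 ih2 => exact ih1.trans ih2
  · intro hr
    induction hr with
    | refl => exact HB.refl _
    | tail _ e ih =>
      refine HB.trans ih ?_
      rcases e with ⟨h1, h2, _⟩ | ⟨l, h1, h2, h3, _⟩
      · exact HB.thread h1 h2
      · exact HB.relAcq l h1 h2 h3
end

section
/- Reduction of Orthogonal Vectors to lock-cover race detection is correct: given two sets A1, A2 of n Boolean vectors of dimension d, construct a trace σ with one variable x and two threads t1, t2, where each vector v in Ai contributes a block in thread ti consisting of acquires of locks {ℓ_k : v[k]=1}, then a write event to x, then the matching releases, with all blocks of A1-vectors appearing before all blocks of A2-vectors in trace order. Then σ has a lock-cover race (two conflicting events holding disjoint lock-sets) if and only if there exist u ∈ A1 and v ∈ A2 that are orthogonal, i.e., for every coordinate k, u[k]=0 or v[k]=0. -/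
/-- The set of locks held by the thread of `e` at `e`: locks acquired by that thread at or
before `e` and not released by that thread in between. -/
def locksHeld (σ : Trace) (e : Fin σ.N) : Set ℕ :=
  {l | ∃ i : Fin σ.N, i ≤ e ∧ σ.tid i = σ.tid e ∧ σ.op i = Op.acquire l ∧
    ∀ j : Fin σ.N, i < j → j ≤ e → σ.tid j = σ.tid e → σ.op j ≠ Op.release l}

/-- The lock mentioned by an operation, if any. -/
def opLock : Op → Option ℕ
  | Op.acquire l => some l
  | Op.release l => some l
  | _ => none

/-- The finite set of locks appearing in a trace. -/
def locksOf (σ : Trace) : Finset ℕ :=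
  Finset.univ.biUnion (fun i : Fin σ.N => (opLock (σ.op i)).toFinset)

/-- Build a trace from a list of events. -/
def Trace.ofList (es : List Event) : Trace :=
  ⟨es.length, fun i => (es.get i).tid, fun i => (es.get i).op⟩

/-- The block of thread `t` for a Boolean vector `v`: acquire `ℓ_k` for each `k` with
`v k = 1`, write the single variable `0`, then release in reverse order. -/
def ovBlock {d : ℕ} (t : ℕ) (v : Fin d → Bool) : List Event :=
  (((List.finRange d).filter (fun k => v k)).map (fun k => ⟨t, Op.acquire k.val⟩)) ++
  [⟨t, Op.write 0⟩] ++
  (((List.finRange d).filter (fun k => v k)).reverse.map (fun k => ⟨t, Op.release k.val⟩))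

/-- The OV-to-lock-cover trace: all blocks of `A1` in thread 1, then all blocks of `A2`
in thread 2. -/
def ovTrace {n d : ℕ} (A1 A2 : Fin n → Fin d → Bool) : Trace :=
  Trace.ofList
    ((((List.finRange n).map (fun a => ovBlock 1 (A1 a))).flatten) ++
     (((List.finRange n).map (fun b => ovBlock 2 (A2 b))).flatten))

/-- Lock-cover race: a conflicting pair of events holding disjoint lock-sets. -/
def LockCoverRace (σ : Trace) : Prop :=
  ∃ (x : ℕ) (e1 e2 : Fin σ.N), Conflicting σ x e1 e2 ∧ locksHeld σ e1 ∩ locksHeld σ e2 = ∅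

/-! Every access in the trace is the write in the middle of some block `ovBlock t v`. Each block
releases every lock it acquires, so the locks held at that write are exactly the locks
`{ℓ_k | v k}` acquired earlier in the same block. Two such writes conflict iff they lie in
different threads, i.e. one comes from `A1` and the other from `A2`, and their lock sets are
disjoint iff the two vectors are orthogonal. -/

theorem List.exists_eq_append_cons_of_flatten_eq {α : Type*} {xss : List (List α)}
    {X Y : List α} {w : α} (h : xss.flatten = X ++ w :: Y) :
    ∃ as B₁ B₂ cs, xss = as ++ (B₁ ++ w :: B₂) :: cs ∧ X = as.flatten ++ B₁ := by
  rcases List.flatten_eq_append_iff.mp h with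
    ⟨as, bs, rfl, rfl, hbs⟩ | ⟨as, B₁, c, B₂, cs, rfl, rfl, hc⟩
  · obtain ⟨nils, B₂, cs, rfl, hnils, -⟩ := List.flatten_eq_cons_iff.mp hbs.symm
    exact ⟨as ++ nils, [], B₂, cs, by simp, by simp [List.flatten_eq_nil_iff.mpr hnils]⟩
  · obtain ⟨rfl, -⟩ := List.cons_eq_cons.mp hc
    exact ⟨as, B₁, B₂, cs, rfl, rfl⟩

theorem List.exists_eq_append_cons_of_lt_length_flatten {α : Type*} {xss : List (List α)}
    {i : ℕ} (hi : i < xss.flatten.length) :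
    ∃ as B₁ B₂ cs, xss = as ++ (B₁ ++ xss.flatten[i] :: B₂) :: cs ∧
      i = (as.flatten ++ B₁).length := by
  have hsplit : xss.flatten = xss.flatten.take i ++ xss.flatten[i] :: xss.flatten.drop (i + 1) := by
    rw [← List.drop_eq_getElem_cons, List.take_append_drop]
  obtain ⟨as, B₁, B₂, cs, hxss, hX⟩ := List.exists_eq_append_cons_of_flatten_eq hsplit
  exact ⟨as, B₁, B₂, cs, hxss, by rw [← hX, List.length_take]; omega⟩

theorem List.flatten_eq_append_cons {α : Type*} {xss as cs : List (List α)} {B₁ B₂ : List α}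
    {w : α} (h : xss = as ++ (B₁ ++ w :: B₂) :: cs) :
    xss.flatten = (as.flatten ++ B₁) ++ w :: (B₂ ++ cs.flatten) := by
  simp [h]

theorem List.getElem_of_eq_append_cons {α : Type*} {l X Y : List α} {w : α}
    (h : l = X ++ w :: Y) (hX : X.length < l.length) : l[X.length] = w := by
  subst h
  simp

theorem List.exists_eq_append_cons_and_iff {α : Type*} {L : List α} {a : α}
    {P : List α → Prop} :
    (∃ L₁ L₂, L = L₁ ++ a :: L₂ ∧ P L₂) ↔
      ∃ (i : ℕ) (hi : i < L.length), L[i] = a ∧ P (L.drop (i + 1)) := by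
  constructor
  · rintro ⟨L₁, L₂, rfl, hP⟩
    exact ⟨L₁.length, by simp, by simp, by simpa using hP⟩
  · rintro ⟨i, hi, rfl, hP⟩
    exact ⟨L.take i, L.drop (i + 1), by rw [← List.drop_eq_getElem_cons, List.take_append_drop], hP⟩

theorem Event.eq_mk_iff {e : Event} {t : ℕ} {o : Op} : e = ⟨t, o⟩ ↔ e.tid = t ∧ e.op = o := by
  cases e
  simp

def heldLocks (t : ℕ) (L : List Event) : Set ℕ :=
  {l | ∃ L₁ L₂, L = L₁ ++ ⟨t, .acquire l⟩ :: L₂ ∧ (⟨t, .release l⟩ : Event) ∉ L₂}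

section heldLocks

variable {t : ℕ} {L M : List Event}

theorem heldLocks_subset : heldLocks t L ⊆ {l | ⟨t, .acquire l⟩ ∈ L} := by
  rintro l ⟨L₁, L₂, rfl, -⟩
  simp

theorem heldLocks_eq_of_forall_release_notMem (h : ∀ l, (⟨t, .release l⟩ : Event) ∉ L) :
    heldLocks t L = {l | ⟨t, .acquire l⟩ ∈ L} := by
  refine heldLocks_subset.antisymm fun l hl => ?_
  obtain ⟨L₁, L₂, rfl⟩ := List.append_of_mem hl
  exact ⟨L₁, L₂, rfl, fun h' => h l (by simp [h'])⟩

theorem heldLocks_subset_append : heldLocks t M ⊆ heldLocks t (L ++ M) := by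
  rintro l ⟨M₁, M₂, rfl, hl⟩
  exact ⟨L ++ M₁, M₂, by simp, hl⟩

theorem heldLocks_append_subset :
    heldLocks t (L ++ M) ⊆
      {l | l ∈ heldLocks t L ∧ (⟨t, .release l⟩ : Event) ∉ M} ∪ heldLocks t M := by
  rintro l ⟨N₁, N₂, hN, hl⟩
  rcases List.append_eq_append_iff.mp hN with ⟨N, rfl, hM⟩ | ⟨N, hL, hN₂⟩
  · exact Or.inr ⟨N, N₂, hM, hl⟩
  · rcases List.cons_eq_append_iff.mp hN₂ with ⟨rfl, rfl⟩ | ⟨N', rfl, rfl⟩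
    · exact Or.inr ⟨[], N₂, rfl, hl⟩
    · simp only [List.mem_append, not_or] at hl
      exact Or.inl ⟨⟨N₁, N', by simpa using hL, hl.1⟩, hl.2⟩

theorem heldLocks_append_of_eq_empty (h : heldLocks t L = ∅) :
    heldLocks t (L ++ M) = heldLocks t M := by
  refine (heldLocks_append_subset.trans ?_).antisymm heldLocks_subset_append
  simp [h]

theorem heldLocks_flatten_eq_empty {Bs : List (List Event)} (h : ∀ B ∈ Bs, heldLocks t B = ∅) :
    heldLocks t Bs.flatten = ∅ := by
  induction Bs with
  | nil => exact Set.subset_empty_iff.mp fun l hl => by simpa using heldLocks_subset hl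
  | cons B Bs ih =>
    rw [List.flatten_cons, heldLocks_append_of_eq_empty (h B List.mem_cons_self)]
    exact ih fun B' hB' => h B' (List.mem_cons_of_mem B hB')

end heldLocks

theorem locksHeld_ofList (es : List Event) {i : ℕ} (hi : i < es.length) :
    locksHeld (Trace.ofList es) ⟨i, hi⟩ = heldLocks es[i].tid (es.take (i + 1)) := by
  ext l
  simp only [locksHeld, heldLocks, Set.mem_ofPred_eq, List.exists_eq_append_cons_and_iff]
  have hN : (Trace.ofList es).N = es.length := rfl
  constructor
  · rintro ⟨⟨a, ha⟩, hai, htid, hacq, hrel⟩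
    simp only [Fin.le_def] at hai
    refine ⟨a, by simp; omega, by simpa [Event.eq_mk_iff] using ⟨htid, hacq⟩, ?_⟩
    rw [List.mem_iff_getElem]
    rintro ⟨j, hj, hrj⟩
    simp only [List.length_drop, List.length_take, List.getElem_drop, List.getElem_take,
      Event.eq_mk_iff] at hj hrj
    exact hrel ⟨a + 1 + j, by omega⟩ (Fin.lt_def.mpr (by simp; omega))
      (Fin.le_def.mpr (by simp; omega)) hrj.1 hrj.2
  · rintro ⟨a, ha, hacq, hrel⟩
    simp only [List.length_take, List.getElem_take, Event.eq_mk_iff] at ha hacq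
    refine ⟨⟨a, by omega⟩, Fin.le_def.mpr (by simp; omega), hacq.1, hacq.2, ?_⟩
    rintro ⟨j, hj⟩ haj hji htid hrj
    apply hrel
    rw [List.mem_iff_getElem]
    simp only [Fin.lt_def, Fin.le_def] at haj hji
    refine ⟨j - (a + 1), by simp; omega, ?_⟩
    have hj' : a + 1 + (j - (a + 1)) = j := by omega
    simp only [List.getElem_drop, List.getElem_take, Event.eq_mk_iff, hj']
    exact ⟨htid, hrj⟩

theorem locksHeld_ofList_of_eq_append_cons {es X Y : List Event} {w : Event}
    (h : es = X ++ w :: Y) (e : Fin (Trace.ofList es).N) (he : e.val = X.length) :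
    locksHeld (Trace.ofList es) e = heldLocks w.tid (X ++ [w]) := by
  obtain ⟨i, hi⟩ := e
  simp only at he
  subst h he
  exact (locksHeld_ofList _ (by simp)).trans (by simp [List.take_append, List.take_of_length_le])

theorem locksHeld_ofList_flatten {Bs as cs : List (List Event)} {B₁ B₂ : List Event} {w : Event}
    (hBs : ∀ B ∈ Bs, ∀ t, heldLocks t B = ∅) (h : Bs = as ++ (B₁ ++ w :: B₂) :: cs)
    (e : Fin (Trace.ofList Bs.flatten).N) (he : e.val = (as.flatten ++ B₁).length) :
    locksHeld (Trace.ofList Bs.flatten) e = heldLocks w.tid (B₁ ++ [w]) := by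
  rw [locksHeld_ofList_of_eq_append_cons (List.flatten_eq_append_cons h) e he, List.append_assoc,
    heldLocks_append_of_eq_empty]
  exact heldLocks_flatten_eq_empty fun B hB => hBs B (by simp [h, hB]) _

section ovBlock

variable {d : ℕ} (t : ℕ) (v : Fin d → Bool)

def acquireAll : List Event :=
  ((List.finRange d).filter (fun k => v k)).map fun k => ⟨t, .acquire k.val⟩

def releaseAll : List Event :=
  ((List.finRange d).filter (fun k => v k)).reverse.map fun k => ⟨t, .release k.val⟩

theorem ovBlock_eq : ovBlock t v = acquireAll t v ++ ⟨t, .write 0⟩ :: releaseAll t v := by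
  simp [ovBlock, acquireAll, releaseAll]

variable {t v}

theorem heldLocks_acquireAll_append_write :
    heldLocks t (acquireAll t v ++ [⟨t, .write 0⟩]) = Fin.val '' {k | v k} := by
  rw [heldLocks_eq_of_forall_release_notMem (by simp [acquireAll])]
  ext l
  simp [acquireAll]

theorem heldLocks_ovBlock (t' : ℕ) : heldLocks t' (ovBlock t v) = ∅ := by
  rw [ovBlock_eq, ← List.singleton_append, ← List.append_assoc, Set.eq_empty_iff_forall_notMem]
  intro l hl
  rcases heldLocks_append_subset hl with ⟨hacq, hrel⟩ | hacq
  · obtain ⟨k, hk, rfl, rfl⟩ : ∃ k, v k ∧ t = t' ∧ k.val = l := by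
      simpa [acquireAll] using heldLocks_subset hacq
    exact hrel (by simpa [releaseAll] using ⟨k, hk, rfl⟩)
  · simpa [releaseAll] using heldLocks_subset hacq

theorem ovBlock_eq_append_cons {B₁ B₂ : List Event} {w : Event} {x : ℕ}
    (h : ovBlock t v = B₁ ++ w :: B₂) (hw : w.op = .read x ∨ w.op = .write x) :
    B₁ = acquireAll t v ∧ w = ⟨t, .write 0⟩ := by
  rw [ovBlock_eq, List.append_cons_inj_of_notMem] at h
  · exact ⟨h.1.symm, h.2.1.symm⟩
  · intro hmem
    obtain ⟨k, -, rfl⟩ := List.mem_map.mp hmem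
    simp at hw
  · intro hmem
    obtain ⟨k, -, rfl⟩ := List.mem_map.mp hmem
    simp at hw

end ovBlock

section ovBlocks

variable {d : ℕ}

/- Blocks are indexed by (thread, vector) pairs so that the vector of a block can be read off
without inverting `ovBlock`. -/
def ovBlocks (bs : List (ℕ × (Fin d → Bool))) : List (List Event) :=
  bs.map fun p => ovBlock p.1 p.2

variable {bs : List (ℕ × (Fin d → Bool))}

theorem heldLocks_of_mem_ovBlocks : ∀ B ∈ ovBlocks bs, ∀ t, heldLocks t B = ∅ := by
  intro B hB t
  obtain ⟨p, -, rfl⟩ := List.mem_map.mp hB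
  exact heldLocks_ovBlock t

theorem exists_mem_locksHeld_eq_of_accessesVar
    {e : Fin (Trace.ofList (ovBlocks bs).flatten).N} {x : ℕ}
    (h : accessesVar (Trace.ofList (ovBlocks bs).flatten) e x) :
    ∃ p ∈ bs, (Trace.ofList (ovBlocks bs).flatten).tid e = p.1 ∧
      locksHeld (Trace.ofList (ovBlocks bs).flatten) e = Fin.val '' {k | p.2 k} := by
  obtain ⟨as, B₁, B₂, cs, hBs, he⟩ := List.exists_eq_append_cons_of_lt_length_flatten e.isLt
  obtain ⟨p, hp, hB⟩ := List.mem_map.mp (hBs ▸ List.mem_append_right as List.mem_cons_self)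
  obtain ⟨rfl, hw⟩ := ovBlock_eq_append_cons hB h
  refine ⟨p, hp, congrArg Event.tid hw, ?_⟩
  rw [locksHeld_ofList_flatten heldLocks_of_mem_ovBlocks hBs e he, hw,
    heldLocks_acquireAll_append_write]

theorem exists_write_locksHeld_eq_of_mem {p : ℕ × (Fin d → Bool)} (hp : p ∈ bs) :
    ∃ e, (Trace.ofList (ovBlocks bs).flatten).op e = .write 0 ∧
      (Trace.ofList (ovBlocks bs).flatten).tid e = p.1 ∧
      locksHeld (Trace.ofList (ovBlocks bs).flatten) e = Fin.val '' {k | p.2 k} := by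
  obtain ⟨as, cs, hBs⟩ :=
    List.append_of_mem (show ovBlock p.1 p.2 ∈ ovBlocks bs from List.mem_map_of_mem hp)
  rw [ovBlock_eq] at hBs
  have hflat := List.flatten_eq_append_cons hBs
  have hlt : (as.flatten ++ acquireAll p.1 p.2).length < (ovBlocks bs).flatten.length := by
    simp [hflat]
  have hw : (ovBlocks bs).flatten[_]'hlt = (⟨p.1, .write 0⟩ : Event) :=
    List.getElem_of_eq_append_cons hflat hlt
  refine ⟨⟨_, hlt⟩, congrArg Event.op hw, congrArg Event.tid hw, ?_⟩
  rw [locksHeld_ofList_flatten heldLocks_of_mem_ovBlocks hBs _ rfl,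
    heldLocks_acquireAll_append_write]

end ovBlocks

theorem image_val_inter_image_val_eq_empty_iff {d : ℕ} {u v : Fin d → Bool} :
    Fin.val '' {k | u k} ∩ Fin.val '' {k | v k} = ∅ ↔ ∀ k, u k = false ∨ v k = false := by
  rw [← Set.image_inter Fin.val_injective, Set.image_eq_empty, Set.eq_empty_iff_forall_notMem]
  simp only [Set.mem_inter_iff, Set.mem_ofPred_eq, not_and_or, Bool.not_eq_true]

theorem ovTrace_eq_ofList_ovBlocks {n d : ℕ} (A1 A2 : Fin n → Fin d → Bool) :
    ovTrace A1 A2 = Trace.ofList (ovBlocks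
      ((List.finRange n).map (fun a => (1, A1 a)) ++
        (List.finRange n).map (fun b => (2, A2 b)))).flatten := by
  simp [ovTrace, ovBlocks, Function.comp_def]

/-- The OV-to-lock-cover reduction is correct: the constructed trace has a
lock-cover race iff there are `u ∈ A1` and `v ∈ A2` that are orthogonal. -/
theorem ov_reduction_correct {n d : ℕ} (A1 A2 : Fin n → Fin d → Bool) :
    LockCoverRace (ovTrace A1 A2) ↔
    ∃ a b : Fin n, ∀ k : Fin d, A1 a k = false ∨ A2 b k = false := by
  have hmem : ∀ p, p ∈ (List.finRange n).map (fun a => (1, A1 a)) ++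
      (List.finRange n).map (fun b => (2, A2 b)) ↔ (∃ a, (1, A1 a) = p) ∨ ∃ b, (2, A2 b) = p := by
    simp
  rw [LockCoverRace, ovTrace_eq_ofList_ovBlocks]
  constructor
  · rintro ⟨x, e₁, e₂, ⟨hne, hx₁, hx₂, -⟩, hdisj⟩
    obtain ⟨p₁, hp₁, ht₁, hL₁⟩ := exists_mem_locksHeld_eq_of_accessesVar hx₁
    obtain ⟨p₂, hp₂, ht₂, hL₂⟩ := exists_mem_locksHeld_eq_of_accessesVar hx₂
    rw [hL₁, hL₂, image_val_inter_image_val_eq_empty_iff] at hdisj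
    rw [ht₁, ht₂] at hne
    rcases (hmem p₁).1 hp₁ with ⟨a, rfl⟩ | ⟨b, rfl⟩ <;>
      rcases (hmem p₂).1 hp₂ with ⟨a', rfl⟩ | ⟨b', rfl⟩
    · exact absurd rfl hne
    · exact ⟨a, b', hdisj⟩
    · exact ⟨a', b, fun k => (hdisj k).symm⟩
    · exact absurd rfl hne
  · rintro ⟨a, b, horth⟩
    obtain ⟨e₁, hop₁, ht₁, hL₁⟩ := exists_write_locksHeld_eq_of_mem ((hmem _).2 (.inl ⟨a, rfl⟩))
    obtain ⟨e₂, hop₂, ht₂, hL₂⟩ := exists_write_locksHeld_eq_of_mem ((hmem _).2 (.inr ⟨b, rfl⟩))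
    refine ⟨0, e₁, e₂, ⟨by simp [ht₁, ht₂], .inr hop₁, .inr hop₂, .inl hop₁⟩, ?_⟩
    rw [hL₁, hL₂, image_val_inter_image_val_eq_empty_iff]
    exact horth
end

section
/- Reduction of Hitting Set to lock-set race detection is correct: given sets X = {x_1,...,x_n} and Y = {y_1,...,y_n} of Boolean vectors of dimension d, construct a trace σ with threads t_0, t_1, ..., t_d, locks ℓ_1,...,ℓ_n, and variables z_1,...,z_n, where thread t_0 holds all locks ℓ_1,...,ℓ_n while writing each z_k once, and for each j ∈ [d], thread t_j holds exactly the locks {ℓ_i : y_i[j]=0} (as one nested critical section) while writing exactly the variables {z_k : x_k[j]=1}. Then σ has a lock-set race on some variable if and only if there exists x_k ∈ X such that for every y_i ∈ Y there is a coordinate j with x_k[j] = y_i[j] = 1 (i.e., x_k hits all vectors of Y). -/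
/-- Lock-set race on variable `x`: a conflicting write/access pair on `x` exists, and the
intersection over all access events of `x` of their held lock-sets is empty. -/
def LockSetRace (σ : Trace) (x : ℕ) : Prop :=
  (∃ e1 e2 : Fin σ.N, σ.tid e1 ≠ σ.tid e2 ∧ σ.op e1 = Op.write x ∧ accessesVar σ e2 x) ∧
  (⋂ e ∈ {e : Fin σ.N | accessesVar σ e x}, locksHeld σ e) = ∅

/-- A block for thread `t`: acquire the given locks in order, write the given variables,
release the locks in reverse order (one nested critical section). -/
def hsBlock (t : ℕ) (locks : List ℕ) (vars : List ℕ) : List Event :=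
  (locks.map (fun l => ⟨t, Op.acquire l⟩)) ++ (vars.map (fun v => ⟨t, Op.write v⟩)) ++
  (locks.reverse.map (fun l => ⟨t, Op.release l⟩))

/-- The Hitting-Set-to-lock-set trace: thread `0` writes every `z_k` while holding all locks
`ℓ_1, …, ℓ_n`; for each `j ∈ [d]`, thread `j+1` writes exactly `{z_k : X k j = 1}` while
holding exactly the locks `{ℓ_i : Y i j = 0}`. -/
def hsTrace {n d : ℕ} (X Y : Fin n → Fin d → Bool) : Trace :=
  Trace.ofList
    (hsBlock 0 ((List.finRange n).map Fin.val) ((List.finRange n).map Fin.val) ++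
     (((List.finRange d).map (fun j =>
        hsBlock (j.val + 1)
          (((List.finRange n).filter (fun i => Y i j = false)).map Fin.val)
          (((List.finRange n).filter (fun k => X k j = true)).map Fin.val))).flatten))

/-! Every thread of the trace runs a single nested critical section, so each write of `z_k` holds
exactly the locks of its thread's section: all of `ℓ_1, …, ℓ_n` for `t_0`, and `{ℓ_i : y_i[j] = 0}`
for `t_j`. The locks common to all writes of `z_k` are therefore the `ℓ_i` such that `y_i[j] = 0`
whenever `x_k[j] = 1`, i.e. those `y_i` missed by `x_k`; this set is empty exactly when `x_k`
hits every `y_i`. In that case `x_k` hits `y_k` itself, so some `t_j` writes `z_k` in conflict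
with `t_0`. -/

lemma mem_locksHeld_ofList {es : List Event} {q : ℕ} (hq : q < es.length) {l : ℕ} :
    l ∈ locksHeld (Trace.ofList es) ⟨q, hq⟩ ↔
      ∃ i, ∃ hi : i < es.length, i ≤ q ∧ es[i].tid = es[q].tid ∧ es[i].op = Op.acquire l ∧
        ∀ j (hj : j < es.length), i < j → j ≤ q → es[j].tid = es[q].tid →
          es[j].op ≠ Op.release l := by
  simp only [locksHeld, Set.mem_ofPred_eq, Fin.exists_iff, Fin.forall_iff, Fin.mk_lt_mk]
  rfl

section Isolated

variable {A M B : List Event} {t : ℕ}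

lemma getElem_append_middle {r : ℕ} (hr : r < M.length) :
    (A ++ M ++ B)[A.length + r]'(by simp; omega) = M[r] := by
  simp [hr]

lemma exists_eq_length_add_of_tid_eq (hA : ∀ e ∈ A, e.tid ≠ t) (hB : ∀ e ∈ B, e.tid ≠ t)
    {q : ℕ} (hq : q < (A ++ M ++ B).length) (ht : (A ++ M ++ B)[q].tid = t) :
    ∃ r < M.length, q = A.length + r := by
  rcases lt_or_ge q A.length with hqA | hqA
  · simp only [List.append_assoc, List.getElem_append_left hqA] at ht
    exact absurd ht (hA _ (List.getElem_mem _))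
  rcases lt_or_ge q (A.length + M.length) with hqM | hqM
  · exact ⟨q - A.length, by omega, by omega⟩
  · rw [List.getElem_append_right (by simp; omega)] at ht
    exact absurd ht (hB _ (List.getElem_mem _))

lemma locksHeld_ofList_append_middle (hA : ∀ e ∈ A, e.tid ≠ t) (hB : ∀ e ∈ B, e.tid ≠ t)
    {r : ℕ} (hr : r < M.length) (hr' : A.length + r < (A ++ M ++ B).length) (ht : M[r].tid = t) :
    locksHeld (Trace.ofList (A ++ M ++ B)) ⟨A.length + r, hr'⟩ =
      locksHeld (Trace.ofList M) ⟨r, hr⟩ := by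
  have thread_mem : ∀ q (hq : q < (A ++ M ++ B).length), (A ++ M ++ B)[q].tid = M[r].tid →
      ∃ r' < M.length, q = A.length + r' := fun q hq hqt =>
    exists_eq_length_add_of_tid_eq hA hB hq (hqt.trans ht)
  ext l
  rw [mem_locksHeld_ofList, mem_locksHeld_ofList, getElem_append_middle hr]
  constructor
  · rintro ⟨i, hi, hir, hti, hacq, hrel⟩
    obtain ⟨i, hi', rfl⟩ := thread_mem i hi hti
    rw [getElem_append_middle hi'] at hti hacq
    refine ⟨i, hi', by omega, hti, hacq, fun j hj hij hjr htj => ?_⟩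
    have := hrel (A.length + j) (by simp; omega) (by omega) (by omega)
      (by rwa [getElem_append_middle hj])
    rwa [getElem_append_middle hj] at this
  · rintro ⟨i, hi, hir, hti, hacq, hrel⟩
    refine ⟨A.length + i, by simp; omega, by omega, by rwa [getElem_append_middle hi],
      by rwa [getElem_append_middle hi], fun j hj hij hjr htj => ?_⟩
    obtain ⟨j, hj', rfl⟩ := thread_mem j hj htj
    rw [getElem_append_middle hj'] at htj ⊢
    exact hrel j hj' (by omega) (by omega) htj

end Isolated

section Block

variable {t : ℕ} {L V : List ℕ}

lemma tid_of_mem_hsBlock {e : Event} (he : e ∈ hsBlock t L V) : e.tid = t := by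
  simp only [hsBlock, List.mem_append, List.mem_map] at he
  rcases he with (⟨_, _, rfl⟩ | ⟨_, _, rfl⟩) | ⟨_, _, rfl⟩ <;> rfl

lemma mem_of_write_mem_hsBlock {e : Event} (he : e ∈ hsBlock t L V) {v : ℕ}
    (hw : e.op = Op.write v) : v ∈ V := by
  simp only [hsBlock, List.mem_append, List.mem_map] at he
  rcases he with (⟨_, _, rfl⟩ | ⟨_, _, rfl⟩) | ⟨_, _, rfl⟩ <;> simp_all

lemma mem_of_acquire_mem_hsBlock {e : Event} (he : e ∈ hsBlock t L V) {l : ℕ}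
    (ha : e.op = Op.acquire l) : l ∈ L := by
  simp only [hsBlock, List.mem_append, List.mem_map, List.mem_reverse] at he
  rcases he with (⟨_, _, rfl⟩ | ⟨_, _, rfl⟩) | ⟨_, _, rfl⟩ <;> simp_all

lemma op_ne_read_of_mem_hsBlock {e : Event} (he : e ∈ hsBlock t L V) (x : ℕ) :
    e.op ≠ Op.read x := by
  simp only [hsBlock, List.mem_append, List.mem_map] at he
  rcases he with (⟨_, _, rfl⟩ | ⟨_, _, rfl⟩) | ⟨_, _, rfl⟩ <;> simp

lemma write_mem_hsBlock {v : ℕ} (hv : v ∈ V) : (⟨t, Op.write v⟩ : Event) ∈ hsBlock t L V := by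
  simp [hsBlock, hv]

lemma hsBlock_getElem_op_of_lt {q : ℕ} (hq : q < L.length) (hq' : q < (hsBlock t L V).length) :
    (hsBlock t L V)[q].op = Op.acquire L[q] := by
  simp [hsBlock, hq]

lemma hsBlock_getElem_op_of_le_of_lt {q : ℕ} (hq₁ : L.length ≤ q) (hq₂ : q < L.length + V.length)
    (hq' : q < (hsBlock t L V).length) :
    (hsBlock t L V)[q].op = Op.write (V[q - L.length]'(by omega)) := by
  simp [hsBlock, List.getElem_append, Nat.not_lt.mpr hq₁, Nat.sub_lt_left_of_lt_add hq₁ hq₂]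

lemma exists_hsBlock_getElem_op_eq_release {q : ℕ} (hq : L.length + V.length ≤ q)
    (hq' : q < (hsBlock t L V).length) : ∃ l, (hsBlock t L V)[q].op = Op.release l := by
  simp [hsBlock, List.getElem_append, show ¬ q < L.length by omega,
    show ¬ q - L.length < V.length by omega]

lemma locksHeld_hsBlock_of_op_eq_write {q : ℕ} (hq : q < (hsBlock t L V).length) {v : ℕ}
    (hw : (hsBlock t L V)[q].op = Op.write v) :
    locksHeld (Trace.ofList (hsBlock t L V)) ⟨q, hq⟩ = {l | l ∈ L} := by
  have same_thread : ∀ i (hi : i < (hsBlock t L V).length),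
      (hsBlock t L V)[i].tid = (hsBlock t L V)[q].tid := fun i hi =>
    (tid_of_mem_hsBlock (List.getElem_mem hi)).trans (tid_of_mem_hsBlock (List.getElem_mem hq)).symm
  have not_release : ∀ j (hj : j < (hsBlock t L V).length), j < L.length + V.length →
      ∀ l, (hsBlock t L V)[j].op ≠ Op.release l := by
    intro j hj hjV l
    rcases lt_or_ge j L.length with hjL | hjL
    · simp [hsBlock_getElem_op_of_lt hjL]
    · simp [hsBlock_getElem_op_of_le_of_lt hjL hjV]
  have hqL : L.length ≤ q := by
    by_contra! hqL
    simp [hsBlock_getElem_op_of_lt hqL] at hw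
  have hqV : q < L.length + V.length := by
    by_contra! hqV
    obtain ⟨l, hl⟩ := exists_hsBlock_getElem_op_eq_release hqV hq
    simp [hl] at hw
  ext l
  rw [mem_locksHeld_ofList]
  constructor
  · rintro ⟨i, hi, -, -, hacq, -⟩
    exact mem_of_acquire_mem_hsBlock (List.getElem_mem hi) hacq
  · intro hl
    obtain ⟨i, hi, rfl⟩ := List.getElem_of_mem hl
    exact ⟨i, by simp [hsBlock]; omega, by omega, same_thread _ _,
      hsBlock_getElem_op_of_lt hi _, fun j hj _ hjq _ => not_release j hj (by omega) _⟩

end Block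

lemma locksHeld_of_isolated_hsBlock {A B es : List Event} {t : ℕ} {L V : List ℕ}
    (hes : es = A ++ hsBlock t L V ++ B) (hA : ∀ e ∈ A, e.tid ≠ t) (hB : ∀ e ∈ B, e.tid ≠ t)
    {q : ℕ} (hq : q < es.length) (ht : es[q].tid = t) {v : ℕ} (hw : es[q].op = Op.write v) :
    locksHeld (Trace.ofList es) ⟨q, hq⟩ = {l | l ∈ L} := by
  subst hes
  obtain ⟨r, hr, rfl⟩ := exists_eq_length_add_of_tid_eq hA hB hq ht
  rw [getElem_append_middle hr] at ht hw
  rw [locksHeld_ofList_append_middle hA hB hr hq ht, locksHeld_hsBlock_of_op_eq_write hr hw]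

structure CriticalSection where
  thread : ℕ
  locks : List ℕ
  vars : List ℕ

namespace CriticalSection

def events (c : CriticalSection) : List Event := hsBlock c.thread c.locks c.vars

variable {cs : List CriticalSection}

lemma exists_flatMap_events_eq (hcs : (cs.map thread).Nodup) {c : CriticalSection}
    (hc : c ∈ cs) :
    ∃ A B, cs.flatMap events = A ++ c.events ++ B ∧
      (∀ e ∈ A, e.tid ≠ c.thread) ∧ ∀ e ∈ B, e.tid ≠ c.thread := by
  obtain ⟨s, u, rfl⟩ := List.append_of_mem hc
  simp only [List.map_append, List.map_cons, List.nodup_append, List.nodup_cons] at hcs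
  refine ⟨s.flatMap events, u.flatMap events, by simp, ?_, ?_⟩
  · intro e he
    obtain ⟨c', hc', he'⟩ := List.mem_flatMap.mp he
    rw [tid_of_mem_hsBlock he']
    exact hcs.2.2 _ (List.mem_map_of_mem hc') _ List.mem_cons_self
  · intro e he
    obtain ⟨c', hc', he'⟩ := List.mem_flatMap.mp he
    rw [tid_of_mem_hsBlock he']
    exact fun h => hcs.2.1.1 (h ▸ List.mem_map_of_mem hc')

lemma exists_mem_of_op_eq_write (hcs : (cs.map thread).Nodup)
    (p : Fin (Trace.ofList (cs.flatMap events)).N) {v : ℕ}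
    (hw : (Trace.ofList (cs.flatMap events)).op p = Op.write v) :
    ∃ c ∈ cs, (Trace.ofList (cs.flatMap events)).tid p = c.thread ∧ v ∈ c.vars ∧
      locksHeld (Trace.ofList (cs.flatMap events)) p = {l | l ∈ c.locks} := by
  obtain ⟨q, hq⟩ := p
  obtain ⟨c, hc, hqc⟩ := List.mem_flatMap.mp (List.getElem_mem hq)
  obtain ⟨A, B, hsplit, hA, hB⟩ := exists_flatMap_events_eq hcs hc
  have ht : (cs.flatMap events)[q].tid = c.thread := tid_of_mem_hsBlock hqc
  exact ⟨c, hc, ht, mem_of_write_mem_hsBlock hqc hw,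
    locksHeld_of_isolated_hsBlock hsplit hA hB hq ht hw⟩

lemma exists_op_eq_write (hcs : (cs.map thread).Nodup) {c : CriticalSection} (hc : c ∈ cs)
    {v : ℕ} (hv : v ∈ c.vars) :
    ∃ p, (Trace.ofList (cs.flatMap events)).tid p = c.thread ∧
      (Trace.ofList (cs.flatMap events)).op p = Op.write v ∧
      locksHeld (Trace.ofList (cs.flatMap events)) p = {l | l ∈ c.locks} := by
  have hmem : (⟨c.thread, Op.write v⟩ : Event) ∈ cs.flatMap events :=
    List.mem_flatMap.mpr ⟨c, hc, write_mem_hsBlock hv⟩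
  obtain ⟨q, hq, hqe⟩ := List.getElem_of_mem hmem
  obtain ⟨A, B, hsplit, hA, hB⟩ := exists_flatMap_events_eq hcs hc
  have ht : (cs.flatMap events)[q].tid = c.thread := by rw [hqe]
  have hw : (cs.flatMap events)[q].op = Op.write v := by rw [hqe]
  exact ⟨⟨q, hq⟩, ht, hw, locksHeld_of_isolated_hsBlock hsplit hA hB hq ht hw⟩

lemma accessesVar_iff_op_eq_write (p : Fin (Trace.ofList (cs.flatMap events)).N) (x : ℕ) :
    accessesVar (Trace.ofList (cs.flatMap events)) p x ↔
      (Trace.ofList (cs.flatMap events)).op p = Op.write x := by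
  obtain ⟨c, -, hpc⟩ := List.mem_flatMap.mp (List.getElem_mem p.isLt)
  exact or_iff_right (op_ne_read_of_mem_hsBlock hpc x)

end CriticalSection

section HittingSet

variable {n d : ℕ} (X Y : Fin n → Fin d → Bool)

def hsMainSection (n : ℕ) : CriticalSection :=
  ⟨0, (List.finRange n).map Fin.val, (List.finRange n).map Fin.val⟩

def hsSection (j : Fin d) : CriticalSection :=
  ⟨j.val + 1, ((List.finRange n).filter (fun i => Y i j = false)).map Fin.val,
    ((List.finRange n).filter (fun k => X k j = true)).map Fin.val⟩

def hsSections : List CriticalSection :=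
  hsMainSection n :: (List.finRange d).map (hsSection X Y)

lemma hsTrace_eq_ofList :
    hsTrace X Y = Trace.ofList ((hsSections X Y).flatMap CriticalSection.events) := by
  rw [hsSections, List.flatMap_cons, List.flatMap_map, List.flatMap_def]
  rfl

lemma hsSections_nodup_thread : ((hsSections X Y).map CriticalSection.thread).Nodup := by
  simp only [hsSections, List.map_cons, List.nodup_cons, List.mem_map, List.map_map]
  refine ⟨by simp [hsSection, hsMainSection], (List.nodup_finRange d).map fun a b h => ?_⟩
  exact Fin.ext (by simpa [hsSection] using h)

lemma mem_hsSections {c : CriticalSection} :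
    c ∈ hsSections X Y ↔ c = hsMainSection n ∨ ∃ j, c = hsSection X Y j := by
  simp [hsSections, eq_comm]

variable {X Y}

lemma mem_hsMainSection_locks {l : ℕ} : l ∈ (hsMainSection n).locks ↔ l < n := by
  simp [hsMainSection]

lemma mem_hsMainSection_vars {v : ℕ} : v ∈ (hsMainSection n).vars ↔ v < n := by
  simp [hsMainSection]

lemma val_mem_hsSection_locks {i : Fin n} {j : Fin d} :
    (i : ℕ) ∈ (hsSection X Y j).locks ↔ Y i j = false := by
  simp [hsSection, Fin.val_inj]

lemma mem_hsSection_vars {v : ℕ} {j : Fin d} :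
    v ∈ (hsSection X Y j).vars ↔ ∃ k : Fin n, X k j = true ∧ (k : ℕ) = v := by
  simp [hsSection]

lemma exists_fin_eq_of_hsTrace_op_eq_write {p : Fin (hsTrace X Y).N} {z : ℕ}
    (hw : (hsTrace X Y).op p = Op.write z) : ∃ k : Fin n, (k : ℕ) = z := by
  revert p
  rw [hsTrace_eq_ofList]
  intro p hw
  obtain ⟨c, hc, -, hv, -⟩ :=
    CriticalSection.exists_mem_of_op_eq_write (hsSections_nodup_thread X Y) p hw
  rcases (mem_hsSections X Y).mp hc with rfl | ⟨j, rfl⟩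
  · exact ⟨⟨z, mem_hsMainSection_vars.mp hv⟩, rfl⟩
  · obtain ⟨k, -, hk⟩ := mem_hsSection_vars.mp hv
    exact ⟨k, hk⟩

lemma hsTrace_exists_conflict {k : Fin n} {j : Fin d} (hX : X k j = true) :
    ∃ e₁ e₂ : Fin (hsTrace X Y).N, (hsTrace X Y).tid e₁ ≠ (hsTrace X Y).tid e₂ ∧
      (hsTrace X Y).op e₁ = Op.write k ∧ accessesVar (hsTrace X Y) e₂ k := by
  rw [hsTrace_eq_ofList]
  have hcs := hsSections_nodup_thread X Y
  obtain ⟨e₁, ht₁, hw₁, -⟩ := CriticalSection.exists_op_eq_write hcs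
    ((mem_hsSections X Y).mpr (.inl rfl)) (v := k) (mem_hsMainSection_vars.mpr k.isLt)
  obtain ⟨e₂, ht₂, hw₂, -⟩ := CriticalSection.exists_op_eq_write hcs
    ((mem_hsSections X Y).mpr (.inr ⟨j, rfl⟩)) (v := k) (mem_hsSection_vars.mpr ⟨k, hX, rfl⟩)
  exact ⟨e₁, e₂, by simp [ht₁, ht₂, hsMainSection, hsSection], hw₁, .inr hw₂⟩

lemma iInter_locksHeld_hsTrace (k : Fin n) :
    (⋂ e ∈ {e | accessesVar (hsTrace X Y) e k}, locksHeld (hsTrace X Y) e) =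
      Fin.val '' {i | ∀ j, X k j = true → Y i j = false} := by
  rw [hsTrace_eq_ofList]
  have hcs := hsSections_nodup_thread X Y
  ext l
  simp only [Set.mem_iInter₂, Set.mem_ofPred_eq, CriticalSection.accessesVar_iff_op_eq_write]
  constructor
  · intro hl
    obtain ⟨p₀, -, hw₀, hl₀⟩ := CriticalSection.exists_op_eq_write hcs
      ((mem_hsSections X Y).mpr (.inl rfl)) (v := k) (mem_hsMainSection_vars.mpr k.isLt)
    have hl₀ : l ∈ (hsMainSection n).locks := by simpa [hl₀] using hl p₀ hw₀
    refine ⟨⟨l, mem_hsMainSection_locks.mp hl₀⟩, fun j hX => ?_, rfl⟩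
    obtain ⟨pⱼ, -, hwⱼ, hlⱼ⟩ := CriticalSection.exists_op_eq_write hcs
      ((mem_hsSections X Y).mpr (.inr ⟨j, rfl⟩)) (v := k) (mem_hsSection_vars.mpr ⟨k, hX, rfl⟩)
    have hlⱼ : l ∈ (hsSection X Y j).locks := by simpa [hlⱼ] using hl pⱼ hwⱼ
    exact val_mem_hsSection_locks.mp hlⱼ
  · rintro ⟨i, hi, rfl⟩ p hw
    obtain ⟨c, hc, -, hv, hlocks⟩ := CriticalSection.exists_mem_of_op_eq_write hcs p hw
    rw [hlocks]
    rcases (mem_hsSections X Y).mp hc with rfl | ⟨j, rfl⟩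
    · exact mem_hsMainSection_locks.mpr i.isLt
    · obtain ⟨k', hX, hk'⟩ := mem_hsSection_vars.mp hv
      exact val_mem_hsSection_locks.mpr (hi j (Fin.val_injective hk' ▸ hX))

end HittingSet

/-- The Hitting-Set-to-lock-set reduction is correct: the constructed trace
has a lock-set race on some variable iff some `x_k ∈ X` hits all vectors of `Y`. -/
theorem hs_reduction_correct {n d : ℕ} (X Y : Fin n → Fin d → Bool) :
    (∃ z : ℕ, LockSetRace (hsTrace X Y) z) ↔
    ∃ k : Fin n, ∀ i : Fin n, ∃ j : Fin d, X k j = true ∧ Y i j = true := by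
  constructor
  · rintro ⟨z, ⟨e₁, -, -, hw, -⟩, hempty⟩
    obtain ⟨k, rfl⟩ := exists_fin_eq_of_hsTrace_op_eq_write hw
    rw [iInter_locksHeld_hsTrace, Set.image_eq_empty, Set.eq_empty_iff_forall_notMem] at hempty
    refine ⟨k, fun i => ?_⟩
    by_contra! hmiss
    exact hempty i fun j hX => by simpa using hmiss j hX
  · rintro ⟨k, hk⟩
    obtain ⟨j, hX, -⟩ := hk k
    refine ⟨k, hsTrace_exists_conflict hX, ?_⟩
    rw [iInter_locksHeld_hsTrace, Set.image_eq_empty, Set.eq_empty_iff_forall_notMem]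
    intro i hi
    obtain ⟨j, hX, hY⟩ := hk i
    simp [hi j hX] at hY
end

section
/- Short witnesses for multi-connectivity: let G be a directed graph with N nodes in which every node has out-degree at most 2, and let (s_1,t_1),...,(s_k,t_k) be pairs of nodes with k ≤ N such that every s_i reaches t_i. Then there exist a set U of at most √N nodes and, for each pair (s_i,t_i) not covered by U (i.e., no node of U lies on any chosen s_i-to-t_i path), a path P_i from s_i to t_i, such that (a) every pair (s_i,t_i) is either covered by some node of U (meaning some u ∈ U is reachable from s_i and reaches t_i) or has an explicit path P_i, and (b) every node of G appears on at most √N of the explicit paths P_i. -/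
/-!
Fix any path `P i` from `s i` to `t i` for every pair. Greedily pick a node lying on more than
`√N` of the paths of the still uncovered pairs, and remove those pairs: each pick removes more
than `√N` of the `k ≤ N` pairs, so fewer than `√N + 1` picks happen. A node on the path of a pair
covers that pair, so afterwards every node lies on at most `√N` paths of uncovered pairs.
-/

open Finset Relation

theorem List.IsChain.reflTransGen_head_and_getLast_of_mem {α : Type*} {r : α → α → Prop}
    {l : List α} (hl : l.IsChain r) (hne : l ≠ []) {v : α} (hv : v ∈ l) :
    ReflTransGen r (l.head hne) v ∧ ReflTransGen r v (l.getLast hne) :=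
  ⟨hl.induction _ _ (fun _ _ hxy hx => hx.tail hxy) (fun _ => .refl) v hv,
    hl.backwards_induction (ReflTransGen r · (l.getLast hne)) _ (fun _ _ hxy hy => hy.head hxy)
      (fun _ => .refl) v hv⟩

theorem exists_card_mul_succ_le_and_residual_degree_le {α ι : Type*} [DecidableEq α]
    (r : α → ι → Prop) [∀ v i, Decidable (r v i)] (b : ℕ) (I : Finset ι) :
    ∃ U : Finset α, #U * (b + 1) ≤ #I ∧
      ∀ v, #{i ∈ I | (∀ u ∈ U, ¬ r u i) ∧ r v i} ≤ b := by
  induction I using Finset.strongInduction with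
  | H I ih =>
    by_cases hlow : ∀ v, #{i ∈ I | r v i} ≤ b
    · exact ⟨∅, by simp, fun v => by simpa using hlow v⟩
    simp only [not_forall, not_le] at hlow
    obtain ⟨v, hv⟩ := hlow
    have hsplit := card_filter_add_card_filter_not (s := I) (r v)
    have hrest : {i ∈ I | ¬ r v i} ⊂ I :=
      filter_ssubset.mpr (by
        obtain ⟨i, hi⟩ := card_pos.mp (b.zero_lt_succ.trans_le hv)
        exact ⟨i, (mem_filter.mp hi).1, not_not.mpr (mem_filter.mp hi).2⟩)
    obtain ⟨U, hU, hres⟩ := ih _ hrest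
    refine ⟨insert v U, ?_, fun w => ?_⟩
    · calc #(insert v U) * (b + 1) ≤ (#U + 1) * (b + 1) := by gcongr; exact card_insert_le _ _
        _ ≤ #I := by linarith
    · convert hres w using 2
      ext i
      simp only [mem_filter, mem_insert, forall_eq_or_imp]
      tauto

theorem Nat.le_sqrt_of_mul_succ_le {m N : ℕ} (h : m * (N.sqrt + 1) ≤ N) : m ≤ N.sqrt := by
  by_contra! hm
  have hN : N < (N.sqrt + 1) * (N.sqrt + 1) := Nat.lt_succ_sqrt N
  have hm' : (N.sqrt + 1) * (N.sqrt + 1) ≤ m * (N.sqrt + 1) := Nat.mul_le_mul_right _ hm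
  omega

open scoped Classical in
theorem multiconn_short_witnesses_general {N k : ℕ} (E : Fin N → Fin N → Prop)
    (hk : k ≤ N) (s t : Fin k → Fin N)
    (hreach : ∀ i : Fin k, Relation.ReflTransGen E (s i) (t i)) :
    ∃ (U : Finset (Fin N)) (P : Fin k → List (Fin N)),
      U.card ≤ Nat.sqrt N ∧
      (∀ i : Fin k,
        (∃ u ∈ U, Relation.ReflTransGen E (s i) u ∧ Relation.ReflTransGen E u (t i)) ∨
        ((P i).Chain' E ∧ (P i).head? = some (s i) ∧ (P i).getLast? = some (t i))) ∧
      (∀ v : Fin N,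
        (Finset.univ.filter (fun i : Fin k =>
          ¬ (∃ u ∈ U, Relation.ReflTransGen E (s i) u ∧ Relation.ReflTransGen E u (t i)) ∧
          v ∈ P i)).card ≤ Nat.sqrt N) := by
  choose P hne hchain hhead hlast using
    fun i => List.exists_isChain_ne_nil_of_relationReflTransGen (hreach i)
  have hcover : ∀ i, ∀ v ∈ P i, ReflTransGen E (s i) v ∧ ReflTransGen E v (t i) := by
    intro i v hv
    simpa only [hhead, hlast] using (hchain i).reflTransGen_head_and_getLast_of_mem (hne i) hv
  obtain ⟨U, hU, hres⟩ :=
    exists_card_mul_succ_le_and_residual_degree_le (fun v i => v ∈ P i) N.sqrt univ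
  have hUcard : U.card ≤ N.sqrt := Nat.le_sqrt_of_mul_succ_le (hU.trans (by simpa using hk))
  refine ⟨U, P, hUcard, fun i => ?_, fun v => ?_⟩
  · exact Or.inr ⟨hchain i, by simp [List.head?_eq_some_head (hne i), hhead],
      by simp [List.getLast?_eq_some_getLast (hne i), hlast]⟩
  · refine (card_le_card fun i => ?_).trans (hres v)
    simp only [mem_filter, mem_univ, true_and]
    exact fun ⟨huncov, hv⟩ => ⟨fun u hu hui => huncov ⟨u, hu, hcover i u hui⟩, hv⟩

open scoped Classical in
/-- Short witnesses for multi-connectivity: in a directed graph on `N` nodes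
with out-degree at most 2, given `k ≤ N` pairs `(s i, t i)` with `s i` reaching `t i`, there is
a set `U` of at most `√N` nodes and explicit paths `P i` such that every pair is either covered
by a node of `U` or has an explicit path from `s i` to `t i`, and every node appears on at most
`√N` of the explicit paths of uncovered pairs. -/
theorem multiconn_short_witnesses {N k : ℕ} (E : Fin N → Fin N → Prop)
    (hdeg : ∀ v : Fin N, (Finset.univ.filter (fun w : Fin N => E v w)).card ≤ 2)
    (hk : k ≤ N) (s t : Fin k → Fin N)
    (hreach : ∀ i : Fin k, Relation.ReflTransGen E (s i) (t i)) :
    ∃ (U : Finset (Fin N)) (P : Fin k → List (Fin N)),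
      U.card ≤ Nat.sqrt N ∧
      (∀ i : Fin k,
        (∃ u ∈ U, Relation.ReflTransGen E (s i) u ∧ Relation.ReflTransGen E u (t i)) ∨
        ((P i).Chain' E ∧ (P i).head? = some (s i) ∧ (P i).getLast? = some (t i))) ∧
      (∀ v : Fin N,
        (Finset.univ.filter (fun i : Fin k =>
          ¬ (∃ u ∈ U, Relation.ReflTransGen E (s i) u ∧ Relation.ReflTransGen E u (t i)) ∧
          v ∈ P i)).card ≤ Nat.sqrt N) :=
  multiconn_short_witnesses_general E hk s t hreach
end

section
/- Sync events enforce ordering: let σ be a trace containing two composite sync(ℓ) events e1 and e2 (each being acq(ℓ), r(x_ℓ), w(x_ℓ), rel(ℓ) on a dedicated variable x_ℓ) with e1 strictly before e2 in trace order and in different threads. Then every correct reordering ρ of σ containing e2 also contains e1 entirely; moreover, for any events e1', e2' ∈ ρ with e1' thread-ordered before (or equal to) the release of e1 and the acquire of e2 thread-ordered before (or equal to) e2', we have e1' strictly before e2' in ρ. -/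
/-- `ρ` (given as the list `l` of σ-events in their new order) is a correct reordering of `σ`:
no duplicates, downward closed under thread order, thread order preserved, and every read
observes the same last write as in `σ`. -/
def CorrectReordering (σ : Trace) (l : List (Fin σ.N)) : Prop :=
  l.Nodup ∧
  (∀ i ∈ l, ∀ j : Fin σ.N, j < i → σ.tid j = σ.tid i → j ∈ l) ∧
  (∀ i ∈ l, ∀ j ∈ l, σ.tid i = σ.tid j → i < j → l.idxOf i < l.idxOf j) ∧
  (∀ i ∈ l, ∀ x : ℕ, σ.op i = Op.read x →
    ((∃ w : Fin σ.N, w ∈ l ∧ σ.op w = Op.write x ∧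
        l.idxOf w < l.idxOf i ∧
        (∀ w' ∈ l, σ.op w' = Op.write x → l.idxOf w' < l.idxOf i →
          l.idxOf w' ≤ l.idxOf w) ∧
        w < i ∧ (∀ w' : Fin σ.N, σ.op w' = Op.write x → w' < i → w' ≤ w)) ∨
     ((∀ w ∈ l, σ.op w = Op.write x → ¬ l.idxOf w < l.idxOf i) ∧
      (∀ w : Fin σ.N, σ.op w = Op.write x → ¬ w < i))))

/-- `ρ` is sync-preserving w.r.t. `σ`: acquires of the same lock appear in the same relative
order in `ρ` as in `σ`. -/
def SyncPreserving (σ : Trace) (l : List (Fin σ.N)) : Prop :=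
  ∀ (lk : ℕ), ∀ i ∈ l, ∀ j ∈ l, σ.op i = Op.acquire lk → σ.op j = Op.acquire lk →
    i < j → l.idxOf i < l.idxOf j

/-- Event `e` is enabled after executing the reordering `l`: `e` is not in `l` but all its
thread-order predecessors are. -/
def Enabled (σ : Trace) (l : List (Fin σ.N)) (e : Fin σ.N) : Prop :=
  e ∉ l ∧ ∀ j : Fin σ.N, j < e → σ.tid j = σ.tid e → j ∈ l

/-- The trace obtained by restricting `σ` to the reordering `l`. -/
def subTrace (σ : Trace) (l : List (Fin σ.N)) : Trace :=
  ⟨l.length, fun p => σ.tid (l.get p), fun p => σ.op (l.get p)⟩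

/-! The read of `e2` must still observe the write of `e1` in `ρ`, so `e1`'s acquire, read and
write all occur in `ρ`, the write before `e2`'s read. Lock well-formedness of `ρ` forces a
release of `ℓ` by the acquiring thread between any two acquires of `ℓ` in `ρ`, and the first
such release after the acquire of a `sync` can only be that `sync`'s own release. If `e2`'s
acquire came first in `ρ`, all of `e2`, in particular its read, would precede `e1`'s acquire and
hence `e1`'s write, which is impossible. So `e1`'s acquire comes first, and `e1`'s release lies
between the two acquires in `ρ`; thread order does the rest. -/

open Finset

section Counting

variable {N : ℕ} (P : Fin N → Prop) [DecidablePred P]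

def countBelow (n : ℕ) : ℕ := #{i : Fin N | (i : ℕ) < n ∧ P i}

theorem countBelow_succ (i : Fin N) :
    countBelow P (i + 1) = countBelow P i + if P i then 1 else 0 := by
  unfold countBelow
  split_ifs with hi
  · have hsplit : univ.filter (fun j : Fin N => (j : ℕ) < i + 1 ∧ P j) =
        insert i (univ.filter fun j : Fin N => (j : ℕ) < i ∧ P j) := by
      ext j
      simp only [mem_filter, mem_univ, true_and, mem_insert, Fin.ext_iff]
      grind
    rw [hsplit, card_insert_of_notMem (by simp)]
  · rw [add_zero]
    congr 1
    ext j
    simp only [mem_filter, mem_univ, true_and]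
    grind

theorem countBelow_mono : Monotone (countBelow P) := fun _ _ hab =>
  card_le_card fun _ hi => by
    simp only [mem_filter, mem_univ, true_and] at hi ⊢
    exact ⟨hi.1.trans_le hab, hi.2⟩

theorem countBelow_eq_of_forall_not {a b : ℕ} (hab : a ≤ b)
    (h : ∀ j : Fin N, a ≤ j → (j : ℕ) < b → ¬ P j) : countBelow P b = countBelow P a := by
  unfold countBelow
  congr 1
  ext j
  simp only [mem_filter, mem_univ, true_and]
  constructor
  · rintro ⟨hjb, hPj⟩
    exact ⟨not_le.mp fun haj => h j haj hjb hPj, hPj⟩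
  · rintro ⟨hja, hPj⟩
    exact ⟨hja.trans_le hab, hPj⟩

end Counting

section LockCounts

variable (τ : Trace) (lk : ℕ)

theorem countAcq_succ (i : Fin τ.N) :
    countAcq τ lk (i + 1) = countAcq τ lk i + if τ.op i = .acquire lk then 1 else 0 :=
  countBelow_succ _ i

theorem countRel_succ (i : Fin τ.N) :
    countRel τ lk (i + 1) = countRel τ lk i + if τ.op i = .release lk then 1 else 0 :=
  countBelow_succ _ i

theorem countAcq_mono_s14 : Monotone (countAcq τ lk) :=
  countBelow_mono _

theorem countRel_eq_of_forall_ne {a b : ℕ} (hab : a ≤ b)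
    (h : ∀ j : Fin τ.N, a ≤ j → (j : ℕ) < b → τ.op j ≠ .release lk) :
    countRel τ lk b = countRel τ lk a :=
  countBelow_eq_of_forall_not _ hab h

end LockCounts

def LockBalanced (τ : Trace) : Prop :=
  ∀ l n, countRel τ l n ≤ countAcq τ l n ∧ countAcq τ l n ≤ countRel τ l n + 1

namespace LockBalanced

variable {τ : Trace} {lk : ℕ} {i j m : Fin τ.N}

theorem countAcq_succ_eq_of_acquire (h : LockBalanced τ) (hi : τ.op i = .acquire lk) :
    countAcq τ lk (i + 1) = countRel τ lk (i + 1) + 1 := by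
  have hacq := countAcq_succ τ lk i
  have hrel := countRel_succ τ lk i
  simp only [hi, if_true, reduceCtorEq, if_false] at hacq hrel
  have := h lk i
  have := h lk (i + 1)
  omega

theorem exists_release_between (h : LockBalanced τ) (hij : i < j)
    (hi : τ.op i = .acquire lk) (hj : τ.op j = .acquire lk) :
    ∃ m, i < m ∧ m < j ∧ τ.op m = .release lk := by
  by_contra! hnone
  have hgap : countRel τ lk j = countRel τ lk (i + 1) :=
    countRel_eq_of_forall_ne τ lk (show (i : ℕ) + 1 ≤ j from hij) fun k hik hkj =>
      hnone k hik hkj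
  have hacq := countAcq_succ τ lk j
  have hrel := countRel_succ τ lk j
  simp only [hj, if_true, reduceCtorEq, if_false] at hacq hrel
  have := countAcq_mono_s14 τ lk (show (i : ℕ) + 1 ≤ j from hij)
  have := h.countAcq_succ_eq_of_acquire hi
  have := h lk (j + 1)
  omega

theorem matched_of_forall_ne_release (h : LockBalanced τ) (hi : τ.op i = .acquire lk)
    (hm : τ.op m = .release lk) (him : i < m)
    (hnone : ∀ k, i < k → k < m → τ.op k ≠ .release lk) : Matched τ lk i m := by
  refine ⟨hi, hm, him, ?_⟩
  have hgap : countRel τ lk m = countRel τ lk (i + 1) :=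
    countRel_eq_of_forall_ne τ lk (show (i : ℕ) + 1 ≤ m from him) fun k hik hkm =>
      hnone k hik hkm
  have hrel := countRel_succ τ lk m
  simp only [hm, if_true] at hrel
  have := h.countAcq_succ_eq_of_acquire hi
  omega

end LockBalanced

theorem WellFormed.exists_first_release_same_thread {τ : Trace} {lk : ℕ} {i j : Fin τ.N}
    (h : WellFormed τ) (hij : i < j) (hi : τ.op i = .acquire lk) (hj : τ.op j = .acquire lk) :
    ∃ m, i < m ∧ m < j ∧ τ.op m = .release lk ∧ τ.tid m = τ.tid i ∧
      ∀ k, i < k → k < m → τ.op k ≠ .release lk := by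
  have hbal : LockBalanced τ := h.1
  obtain ⟨m, ⟨him, hmj, hm⟩, hfirst⟩ := wellFounded_lt.has_min
    {m | i < m ∧ m < j ∧ τ.op m = .release lk} (hbal.exists_release_between hij hi hj)
  have hnone : ∀ k, i < k → k < m → τ.op k ≠ .release lk := fun k hik hkm hk =>
    hfirst k ⟨hik, hkm.trans hmj, hk⟩ hkm
  exact ⟨m, him, hmj, hm, (h.2 lk i m (hbal.matched_of_forall_ne_release hi hm him hnone)).symm,
    hnone⟩

theorem WellFormed.subTrace_exists_first_release {σ : Trace} {l : List (Fin σ.N)} {lk : ℕ}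
    {a b : Fin σ.N} (hwf : WellFormed (subTrace σ l)) (hnd : l.Nodup) (ha : a ∈ l) (hb : b ∈ l)
    (hopa : σ.op a = .acquire lk) (hopb : σ.op b = .acquire lk)
    (hab : l.idxOf a < l.idxOf b) :
    ∃ rel ∈ l, σ.op rel = .release lk ∧ σ.tid rel = σ.tid a ∧
      l.idxOf a < l.idxOf rel ∧ l.idxOf rel < l.idxOf b ∧
      ∀ k ∈ l, l.idxOf a < l.idxOf k → l.idxOf k < l.idxOf rel → σ.op k ≠ .release lk := by
  have hpos (e : Fin σ.N) (he : e ∈ l) : l.get ⟨l.idxOf e, List.idxOf_lt_length_iff.mpr he⟩ = e :=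
    List.getElem_idxOf _
  obtain ⟨m, ham, hmb, hm, htid, hfirst⟩ := hwf.exists_first_release_same_thread (lk := lk)
    (i := ⟨l.idxOf a, List.idxOf_lt_length_iff.mpr ha⟩)
    (j := ⟨l.idxOf b, List.idxOf_lt_length_iff.mpr hb⟩) hab
    (by simp only [subTrace, hpos a ha, hopa]) (by simp only [subTrace, hpos b hb, hopb])
  have hm_idx : l.idxOf (l.get m) = m := List.get_idxOf hnd m
  refine ⟨l.get m, List.get_mem _ _, hm, ?_, hm_idx ▸ ham, hm_idx ▸ hmb, fun k hk hak hkm => ?_⟩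
  · simpa only [subTrace, hpos a ha] using htid
  · simpa only [subTrace, hpos k hk] using
      hfirst ⟨l.idxOf k, List.idxOf_lt_length_iff.mpr hk⟩ hak (show l.idxOf k < m from hm_idx ▸ hkm)

namespace CorrectReordering

variable {σ : Trace} {l : List (Fin σ.N)}

theorem idxOf_le_of_le (hcr : CorrectReordering σ l) {e f : Fin σ.N} (he : e ∈ l) (hf : f ∈ l)
    (htid : σ.tid e = σ.tid f) (hef : e ≤ f) : l.idxOf e ≤ l.idxOf f := by
  rcases hef.eq_or_lt with rfl | hlt
  · exact le_rfl
  · exact (hcr.2.2.1 e he f hf htid hlt).le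

theorem lt_of_idxOf_lt (hcr : CorrectReordering σ l) {e f : Fin σ.N} (he : e ∈ l) (hf : f ∈ l)
    (htid : σ.tid e = σ.tid f) (hef : l.idxOf e < l.idxOf f) : e < f :=
  lt_of_not_ge fun hfe => (hcr.idxOf_le_of_le hf he htid.symm hfe).not_gt hef

theorem mem_and_idxOf_lt_of_last_write (hcr : CorrectReordering σ l) {r w : Fin σ.N} {x : ℕ}
    (hr : r ∈ l) (hread : σ.op r = .read x) (hwrite : σ.op w = .write x) (hwr : w < r)
    (hlast : ∀ w', σ.op w' = .write x → w' < r → w' ≤ w) : w ∈ l ∧ l.idxOf w < l.idxOf r := by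
  rcases hcr.2.2.2 r hr x hread with ⟨w₀, hw₀, hw₀write, hw₀r, -, hw₀lt, hw₀last⟩ | ⟨-, hnone⟩
  · obtain rfl : w₀ = w := le_antisymm (hlast w₀ hw₀write hw₀lt) (hw₀last w hwrite hwr)
    exact ⟨hw₀, hw₀r⟩
  · exact absurd hwr (hnone w hwrite)

theorem release_mem_and_idxOf_lt (hcr : CorrectReordering σ l) (hwf : WellFormed (subTrace σ l))
    {lk : ℕ} {a b rl : Fin σ.N} (ha : a ∈ l) (hb : b ∈ l)
    (hopa : σ.op a = .acquire lk) (hopb : σ.op b = .acquire lk) (hab : l.idxOf a < l.idxOf b)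
    (hrl : σ.op rl = .release lk) (htid : σ.tid rl = σ.tid a) (harl : a < rl)
    (hnone : ∀ k, a < k → k < rl → σ.tid k = σ.tid a → σ.op k ≠ .release lk) :
    rl ∈ l ∧ l.idxOf rl < l.idxOf b := by
  obtain ⟨rel, hrel, hoprel, htidrel, hai, hib, hfirst⟩ :=
    hwf.subTrace_exists_first_release hcr.1 ha hb hopa hopb hab
  have ha_rel : a < rel := hcr.lt_of_idxOf_lt ha hrel htidrel.symm hai
  have hrl_rel : rl ≤ rel := le_of_not_gt fun hlt => hnone rel ha_rel hlt htidrel hoprel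
  rcases hrl_rel.eq_or_lt with rfl | hlt
  · exact ⟨hrel, hib⟩
  · have hrl_mem : rl ∈ l := hcr.2.1 rel hrel rl hlt (htid.trans htidrel.symm)
    exact absurd hrl <| hfirst rl hrl_mem (hcr.2.2.1 a ha rl hrl_mem htid.symm harl)
      (hcr.2.2.1 rl hrl_mem rel hrel (htid.trans htidrel.symm) hlt)

end CorrectReordering

theorem sync_enforces_ordering_general (σ : Trace) (lk xl : ℕ)
    (a1 r1 w1 rl1 a2 r2 w2 rl2 : Fin σ.N)
    (ht1 : σ.tid r1 = σ.tid a1) (ht1' : σ.tid w1 = σ.tid a1) (ht1'' : σ.tid rl1 = σ.tid a1)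
    (ht2 : σ.tid r2 = σ.tid a2) (ht2'' : σ.tid rl2 = σ.tid a2)
    (hc1 : (a1 : ℕ) + 1 = (r1 : ℕ)) (hc2 : (r1 : ℕ) + 1 = (w1 : ℕ))
    (hc3 : (w1 : ℕ) + 1 = (rl1 : ℕ))
    (hc4 : (a2 : ℕ) + 1 = (r2 : ℕ)) (hc5 : (r2 : ℕ) + 1 = (w2 : ℕ))
    (hc6 : (w2 : ℕ) + 1 = (rl2 : ℕ))
    (ho1 : σ.op a1 = Op.acquire lk) (ho2 : σ.op r1 = Op.read xl)
    (ho3 : σ.op w1 = Op.write xl) (ho4 : σ.op rl1 = Op.release lk)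
    (ho5 : σ.op a2 = Op.acquire lk) (ho6 : σ.op r2 = Op.read xl)
    (ho7 : σ.op w2 = Op.write xl) (ho8 : σ.op rl2 = Op.release lk)
    (htids : σ.tid a1 ≠ σ.tid a2)
    (hbefore : rl1 < a2)
    (hobs : ∀ w' : Fin σ.N, σ.op w' = Op.write xl → w' < r2 → w' ≤ w1)
    (l : List (Fin σ.N))
    (hcr : CorrectReordering σ l)
    (hwf : WellFormed (subTrace σ l))
    (hin : r2 ∈ l) :
    (a1 ∈ l ∧ r1 ∈ l ∧ w1 ∈ l ∧ rl1 ∈ l) ∧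
    (∀ e1' ∈ l, ∀ e2' ∈ l, σ.tid e1' = σ.tid a1 → e1' ≤ rl1 →
      σ.tid e2' = σ.tid a2 → a2 ≤ e2' → l.idxOf e1' < l.idxOf e2') := by
  have hbefore_val : (rl1 : ℕ) < a2 := hbefore
  obtain ⟨hw1, hw1r2⟩ := hcr.mem_and_idxOf_lt_of_last_write hin ho6 ho3
    (Fin.lt_def.mpr (by omega)) hobs
  have ha1 : a1 ∈ l := hcr.2.1 w1 hw1 a1 (Fin.lt_def.mpr (by omega)) ht1'.symm
  have hr1 : r1 ∈ l := hcr.2.1 w1 hw1 r1 (Fin.lt_def.mpr (by omega)) (ht1.trans ht1'.symm)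
  have ha2 : a2 ∈ l := hcr.2.1 r2 hin a2 (Fin.lt_def.mpr (by omega)) ht2.symm
  have hsection1 : ∀ k, a1 < k → k < rl1 → σ.tid k = σ.tid a1 → σ.op k ≠ .release lk := by
    intro k hk1 hk2 _
    obtain rfl | rfl : k = r1 ∨ k = w1 := by omega
    all_goals simp [ho2, ho3]
  have hsection2 : ∀ k, a2 < k → k < rl2 → σ.tid k = σ.tid a2 → σ.op k ≠ .release lk := by
    intro k hk1 hk2 _
    obtain rfl | rfl : k = r2 ∨ k = w2 := by omega
    all_goals simp [ho6, ho7]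
  have ha1a2 : l.idxOf a1 < l.idxOf a2 := by
    rcases lt_trichotomy (l.idxOf a1) (l.idxOf a2) with h | h | h
    · exact h
    · exact absurd ((List.idxOf_inj ha1).mp h ▸ rfl) htids
    · obtain ⟨hrl2, hrl2a1⟩ := hcr.release_mem_and_idxOf_lt hwf ha2 ha1 ho5 ho1 h ho8 ht2''
        (Fin.lt_def.mpr (by omega)) hsection2
      have := hcr.2.2.1 a1 ha1 w1 hw1 ht1'.symm (Fin.lt_def.mpr (by omega))
      have := hcr.2.2.1 r2 hin rl2 hrl2 (ht2.trans ht2''.symm) (Fin.lt_def.mpr (by omega))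
      omega
  obtain ⟨hrl1, hrl1a2⟩ := hcr.release_mem_and_idxOf_lt hwf ha1 ha2 ho1 ho5 ha1a2 ho4 ht1''
    (Fin.lt_def.mpr (by omega)) hsection1
  refine ⟨⟨ha1, hr1, hw1, hrl1⟩, fun e1' he1' e2' he2' htid1 hle1 htid2 hle2 => ?_⟩
  calc l.idxOf e1' ≤ l.idxOf rl1 := hcr.idxOf_le_of_le he1' hrl1 (htid1.trans ht1''.symm) hle1
    _ < l.idxOf a2 := hrl1a2
    _ ≤ l.idxOf e2' := hcr.idxOf_le_of_le ha2 he2' htid2.symm hle2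

/-- Sync events enforce ordering: if `σ` contains two composite `sync(ℓ)`
events `e1 = (a1, r1, w1, rl1)` and `e2 = (a2, r2, w2, rl2)` on a dedicated variable `xl`, in
different threads, with `e1` strictly before `e2` in trace order, and the read of `e2` observes
the write of `e1`, then every correct, lock-well-formed reordering containing the read of `e2`
contains `e1` entirely; moreover any event thread-ordered up to the release of `e1` occurs in
the reordering strictly before any event thread-ordered from the acquire of `e2` on. -/
theorem sync_enforces_ordering (σ : Trace) (lk xl : ℕ)
    (a1 r1 w1 rl1 a2 r2 w2 rl2 : Fin σ.N)
    (ht1 : σ.tid r1 = σ.tid a1) (ht1' : σ.tid w1 = σ.tid a1) (ht1'' : σ.tid rl1 = σ.tid a1)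
    (ht2 : σ.tid r2 = σ.tid a2) (ht2' : σ.tid w2 = σ.tid a2) (ht2'' : σ.tid rl2 = σ.tid a2)
    (hc1 : (a1 : ℕ) + 1 = (r1 : ℕ)) (hc2 : (r1 : ℕ) + 1 = (w1 : ℕ))
    (hc3 : (w1 : ℕ) + 1 = (rl1 : ℕ))
    (hc4 : (a2 : ℕ) + 1 = (r2 : ℕ)) (hc5 : (r2 : ℕ) + 1 = (w2 : ℕ))
    (hc6 : (w2 : ℕ) + 1 = (rl2 : ℕ))
    (ho1 : σ.op a1 = Op.acquire lk) (ho2 : σ.op r1 = Op.read xl)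
    (ho3 : σ.op w1 = Op.write xl) (ho4 : σ.op rl1 = Op.release lk)
    (ho5 : σ.op a2 = Op.acquire lk) (ho6 : σ.op r2 = Op.read xl)
    (ho7 : σ.op w2 = Op.write xl) (ho8 : σ.op rl2 = Op.release lk)
    (htids : σ.tid a1 ≠ σ.tid a2)
    (hbefore : rl1 < a2)
    (hobs : ∀ w' : Fin σ.N, σ.op w' = Op.write xl → w' < r2 → w' ≤ w1)
    (l : List (Fin σ.N))
    (hcr : CorrectReordering σ l)
    (hwf : WellFormed (subTrace σ l))
    (hin : r2 ∈ l) :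
    (a1 ∈ l ∧ r1 ∈ l ∧ w1 ∈ l ∧ rl1 ∈ l) ∧
    (∀ e1' ∈ l, ∀ e2' ∈ l, σ.tid e1' = σ.tid a1 → e1' ≤ rl1 →
      σ.tid e2' = σ.tid a2 → a2 ≤ e2' → l.idxOf e1' < l.idxOf e2') :=
  sync_enforces_ordering_general σ lk xl a1 r1 w1 rl1 a2 r2 w2 rl2 ht1 ht1' ht1'' ht2 ht2'' hc1 hc2
    hc3 hc4 hc5 hc6 ho1 ho2 ho3 ho4 ho5 ho6 ho7 ho8 htids hbefore hobs l hcr hwf hin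
end

section
/- Model-checking reduction gadget correctness: let H = (I, J) be a graph and φ = ∀x ∃y ∃z (ψ_1 ∨ ... ∨ ψ_k) where each ψ_i is a conjunction of three literals λ_1, λ_2, λ_3, with λ_1 being e(x,y) or its negation, λ_2 being e(y,z) or its negation, and λ_3 being e(x,z) or its negation. Construct the (2k+2)-partite directed graph G with parts S, Y_1, Z_1, ..., Y_k, Z_k, T, each a copy of I, where for each predicate ψ_i the edges from S to Y_i realize λ_1 (a copy of H if the literal is positive, a copy of the complement of H if it is negative), the edges from Y_i to Z_i realize λ_2, and the edges from Z_i to T realize λ_3. Then φ holds on H if and only if for every node u ∈ I there is a directed path in G from u's copy in S to u's copy in T. -/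
/-- Apply a literal of sign `pos` to an edge proposition. -/
def applyLit (pos : Bool) (e : Prop) : Prop := if pos then e else ¬ e

/-- Vertices of the `(2k+2)`-partite gadget graph: parts `S`, `Y i`, `Z i` (`i < k`), `T`,
each a copy of the node set `I` of `H`. -/
inductive MCV (I : Type*) (k : ℕ) : Type _
  | S (u : I)
  | Y (i : Fin k) (u : I)
  | Z (i : Fin k) (u : I)
  | T (u : I)

/-- Edges of the gadget: for predicate `ψ i` with literal signs `L i 0, L i 1, L i 2` over the
atoms `e(x,y)`, `e(y,z)`, `e(x,z)`, edges from `S` to `Y i` realize the first literal (a copy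
of `H` for a positive literal, of its complement for a negative one), edges from `Y i` to `Z i`
the second, and edges from `Z i` to `T` the third. -/
inductive MCE {I : Type*} {k : ℕ} (J : I → I → Prop) (L : Fin k → Fin 3 → Bool) :
    MCV I k → MCV I k → Prop
  | sy {i : Fin k} {x y : I} : applyLit (L i 0) (J x y) → MCE J L (MCV.S x) (MCV.Y i y)
  | yz {i : Fin k} {y z : I} : applyLit (L i 1) (J y z) → MCE J L (MCV.Y i y) (MCV.Z i z)
  | zt {i : Fin k} {x z : I} : applyLit (L i 2) (J x z) → MCE J L (MCV.Z i z) (MCV.T x)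

lemma mc_aux {I : Type*} {k : ℕ} (J : I → I → Prop) (L : Fin k → Fin 3 → Bool) (u : I) :
    ∀ v, Relation.ReflTransGen (MCE J L) v (MCV.T u) →
    (v = MCV.T u) ∨
    (∃ i z, v = MCV.Z i z ∧ applyLit (L i 2) (J u z)) ∨
    (∃ i y, v = MCV.Y i y ∧ ∃ z, applyLit (L i 1) (J y z) ∧ applyLit (L i 2) (J u z)) ∨
    (∃ x, v = MCV.S x ∧ ∃ y z i, applyLit (L i 0) (J x y) ∧ applyLit (L i 1) (J y z) ∧
      applyLit (L i 2) (J u z)) := by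
  intro v hv
  induction hv using Relation.ReflTransGen.head_induction_on with
  | refl => exact Or.inl rfl
  | head e _ ih =>
    rename_i a b _
    rcases e with @⟨i, x, y, h1⟩ | @⟨i, y, z, h2⟩ | @⟨i, x, z, h3⟩
    · rcases ih with h | ⟨i', z', h, _⟩ | ⟨i', y', h, z, hyz, hzt⟩ | ⟨x', h, _⟩
      · exact absurd h (by simp)
      · exact absurd h (by simp)
      · injection h with hi hy; subst hi; subst hy
        exact Or.inr (Or.inr (Or.inr ⟨x, rfl, y, z, i, h1, hyz, hzt⟩))
      · exact absurd h (by simp)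
    · rcases ih with h | ⟨i', z', h, hzt⟩ | ⟨i', y', h, _⟩ | ⟨x', h, _⟩
      · exact absurd h (by simp)
      · injection h with hi hz; subst hi; subst hz
        exact Or.inr (Or.inr (Or.inl ⟨i, y, rfl, z, h2, hzt⟩))
      · exact absurd h (by simp)
      · exact absurd h (by simp)
    · rcases ih with h | ⟨i', z', h, _⟩ | ⟨i', y', h, _⟩ | ⟨x', h, _⟩
      · injection h with hx; subst hx
        exact Or.inr (Or.inl ⟨i, z, rfl, h3⟩)
      · exact absurd h (by simp)
      · exact absurd h (by simp)
      · exact absurd h (by simp)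

/-- Gadget correctness of the model-checking reduction: the formula
`∀x ∃y ∃z (ψ_1 ∨ … ∨ ψ_k)` holds on the (symmetric) edge relation `J` iff for every node `u`,
the copy of `u` in `T` is reachable from the copy of `u` in `S` in the gadget graph. -/
theorem fo_gadget_correct {I : Type*} {k : ℕ} (J : I → I → Prop)
    (hsymm : ∀ a b : I, J a b → J b a) (L : Fin k → Fin 3 → Bool) :
    (∀ x : I, ∃ y z : I, ∃ i : Fin k,
      applyLit (L i 0) (J x y) ∧ applyLit (L i 1) (J y z) ∧ applyLit (L i 2) (J x z)) ↔
    (∀ u : I, Relation.ReflTransGen (MCE J L) (MCV.S u) (MCV.T u)) := by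
  constructor
  · intro h u
    obtain ⟨y, z, i, h1, h2, h3⟩ := h u
    exact .head (.sy h1) (.head (.yz h2) (.single (.zt h3)))
  · intro h u
    rcases mc_aux J L u _ (h u) with h0 | ⟨_, _, h0, _⟩ | ⟨_, _, h0, _⟩ | ⟨x, h0, y, z, i, h1, h2, h3⟩
    · cases h0
    · cases h0
    · cases h0
    · injection h0 with hx; subst hx; exact ⟨y, z, i, h1, h2, h3⟩
end
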